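/- arXiv:2503.20045 — 7 statements merged into one kernel-verified Lean document; each statement's English description precedes it below -/
import Mathlib

section
/- For every ε > 0 and every integer k ≥ 2 there exists a constant c ≥ 1 such that every finite simple undirected graph G with chromatic number χ(G) ≥ c and minimum degree at least ε·|V(G)| contains a cycle of length 2k+1 as a subgraph. -/
/-!
Let `G` have minimum degree at least `εn` and no cycle of length `2k + 1`. No neighbourhood
`N(y)` contains a path on `2k` vertices (it would close into a `(2k+1)`-cycle through `y`), so
`N(y)` is `(2k-2)`-degenerate and hence `(2k-1)`-colourable.

In `N(v)`, averaging `k - 1` times yields a set `W_v` of `k - 1` vertices complete to a set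
`I_v ⊆ N(v)` of size at least `σn`, where `σ = (ε/2)^(k-1) ε`. If `y ≠ y'` lie in `I_v` and
`y u u' y'` is a path with `u, u' ∉ W_v ∪ I_v`, an alternating path through `W_v` and `I_v`
closes it into a `(2k+1)`-cycle. Hence all edges of `N(I_v) \ (W_v ∪ I_v)` lie inside single
neighbourhoods `N(y)`, `y ∈ I_v`, and `N(I_v)` is `3(2k-1)`-colourable. A maximal family of
vertices `v` with pairwise disjoint `I_v` has at most `1/σ` members, and every vertex `u` lies in
some `N(I_v)` of the family because `I_u ⊆ N(u)` meets some `I_v`. So `χ(G) ≤ 3(2k-1)/σ`.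
-/

open Finset

theorem Finset.exists_pairwiseDisjoint_forall_not_disjoint {ι α : Type*} [Fintype ι]
    (I : ι → Finset α) (hI : ∀ i, (I i).Nonempty) :
    ∃ M : Finset ι, (M : Set ι).PairwiseDisjoint I ∧ ∀ i, ∃ j ∈ M, ¬ Disjoint (I i) (I j) := by
  classical
  obtain ⟨M, hM, hmax⟩ := exists_max_image {M : Finset ι | (M : Set ι).PairwiseDisjoint I} card
    ⟨∅, by simp⟩
  rw [mem_filter] at hM
  refine ⟨M, hM.2, fun i => ?_⟩
  by_cases hi : i ∈ M
  · exact ⟨i, hi, by simpa using (hI i).ne_empty⟩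
  by_contra! h
  have := hmax (insert i M) (mem_filter.mpr ⟨mem_univ _, by
    rw [coe_insert]; exact hM.2.insert fun j hj _ => h j hj⟩)
  rw [card_insert_of_notMem hi] at this
  omega

namespace SimpleGraph

variable {V : Type*} {G : SimpleGraph V}

/-- Meaningful for `N ≥ 3`; for `N = 2` it only asks for an edge. -/
def HasCycleOfLength (G : SimpleGraph V) (N : ℕ) : Prop :=
  ∃ f : ZMod N → V, Function.Injective f ∧ ∀ i, G.Adj (f i) (f (i + 1))

theorem hasCycleOfLength_of_isChain {a : V} {t : List V} (hnd : (a :: t).Nodup)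
    (hc : (a :: t ++ [a]).IsChain G.Adj) : G.HasCycleOfLength (t.length + 1) := by
  set N := t.length + 1
  set L := a :: t
  have hlt (i : ZMod N) : i.val < L.length := ZMod.val_lt i
  refine ⟨fun i => L[i.val]'(hlt i), fun i j h => ZMod.val_injective _ ?_, fun i => ?_⟩
  · exact (hnd.getElem_inj_iff).mp h
  have hsucc : (i + 1).val = (i.val + 1) % N := by
    rw [ZMod.val_add, ZMod.val_one_eq_one_mod, Nat.add_mod_mod]
  have key := hc.getElem i.val (by simpa using hlt i)
  rw [List.getElem_append_left (hlt i)] at key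
  rcases Nat.lt_or_ge (i.val + 1) N with h | h
  · simp only [hsucc, Nat.mod_eq_of_lt h]
    rwa [List.getElem_append_left (show i.val + 1 < L.length from h)] at key
  · have hN : i.val + 1 = N := le_antisymm (hlt i) h
    simp only [hsucc, hN, Nat.mod_self]
    rwa [List.getElem_concat_length hN] at key

theorem IsCompleteBetween.exists_alternating_path [DecidableEq V] (m : ℕ) {W I : Finset V}
    (hWI : G.IsCompleteBetween W I) {a b : V} (ha : a ∈ I) (hb : b ∈ I) (hab : a ≠ b)
    (hW : m + 1 ≤ #W) (hI : m + 2 ≤ #I) :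
    ∃ Z : List V, (a :: Z ++ [b]).Nodup ∧ (a :: Z ++ [b]).IsChain G.Adj ∧
      Z.length = 2 * m + 1 ∧ ∀ x ∈ Z, x ∈ W ∪ I := by
  induction m generalizing W I a b with
  | zero =>
    obtain ⟨w, hw⟩ := card_pos.mp (by omega : 0 < #W)
    refine ⟨[w], ?_, ?_, rfl, by simp [hw]⟩
    · simp [hab, (hWI hw ha).ne', (hWI hw hb).ne]
    · simp [(hWI hw ha).symm, hWI hw hb]
  | succ m ih =>
    obtain ⟨w, hw⟩ := card_pos.mp (by omega : 0 < #W)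
    obtain ⟨c, hc⟩ := card_pos.mp (by
      have := pred_card_le_card_erase (s := I.erase a) (a := b)
      have := pred_card_le_card_erase (s := I) (a := a)
      omega : 0 < #((I.erase a).erase b))
    obtain ⟨hcb, hca, hcI⟩ : c ≠ b ∧ c ≠ a ∧ c ∈ I := by simpa using hc
    have hWI' : G.IsCompleteBetween (W.erase w : Set V) (I.erase a : Set V) :=
      fun x hx y hy => hWI (mem_of_mem_erase hx) (mem_of_mem_erase hy)
    obtain ⟨Z, hnd, hch, hlen, hmem⟩ := ih hWI' (mem_erase.mpr ⟨hca, hcI⟩)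
      (mem_erase.mpr ⟨hab.symm, hb⟩) hcb (by rw [card_erase_of_mem hw]; omega)
      (by rw [card_erase_of_mem ha]; omega)
    have hsub : ∀ x ∈ c :: Z ++ [b], x ∈ W.erase w ∪ I.erase a := by
      simp only [List.cons_append, List.mem_cons, List.mem_append, List.not_mem_nil, or_false]
      rintro x (rfl | hx | rfl)
      · exact mem_union_right _ (mem_erase.mpr ⟨hca, hcI⟩)
      · exact hmem x hx
      · exact mem_union_right _ (mem_erase.mpr ⟨hab.symm, hb⟩)
    have haW : a ∉ W := fun h => G.irrefl (hWI h ha)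
    have hwI : w ∉ I := fun h => G.irrefl (hWI hw h)
    have ha' : a ∉ W.erase w ∪ I.erase a := by simp [haW]
    have hw' : w ∉ W.erase w ∪ I.erase a := by simp [hwI]
    refine ⟨w :: c :: Z, ?_, ?_, by simp [hlen]; ring, ?_⟩
    · rw [List.cons_append, List.cons_append, List.nodup_cons, List.nodup_cons]
      refine ⟨?_, fun h => hw' (hsub w h), hnd⟩
      rintro (_ | ⟨_, h⟩)
      · exact G.irrefl (hWI hw ha)
      · exact ha' (hsub a h)
    · simp only [List.cons_append, List.isChain_cons_cons] at hch ⊢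
      exact ⟨(hWI hw ha).symm, hWI hw hcI, hch⟩
    · simp only [List.mem_cons]
      rintro x (rfl | rfl | hx)
      · exact mem_union_left _ hw
      · exact mem_union_right _ hcI
      · exact union_subset_union (erase_subset _ _) (erase_subset _ _) (hmem x hx)

theorem hasCycleOfLength_of_isCompleteBetween [DecidableEq V] {k : ℕ} (hk : 2 ≤ k)
    {W I : Finset V} (hWI : G.IsCompleteBetween W I) (hW : k ≤ #W + 1) (hI : k ≤ #I)
    {y y' u u' : V} (hy : y ∈ I) (hy' : y' ∈ I) (hne : y ≠ y')
    (hyu : G.Adj y u) (huu' : G.Adj u u') (hu'y' : G.Adj u' y')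
    (hu : u ∉ W ∪ I) (hu' : u' ∉ W ∪ I) : G.HasCycleOfLength (2 * k + 1) := by
  obtain ⟨m, rfl⟩ : ∃ m, k = m + 2 := ⟨k - 2, by omega⟩
  -- the cycle is `y' Z y u u'`, where `y' Z y` alternates between `I` and `W`
  obtain ⟨Z, hnd, hch, hlen, hmem⟩ :=
    hWI.exists_alternating_path m hy' hy hne.symm (by omega) (by omega)
  have hcycle := hasCycleOfLength_of_isChain (G := G) (a := y') (t := Z ++ [y, u, u']) ?_ ?_
  · convert hcycle using 1
    simp [hlen]; ring
  · have : y' :: (Z ++ [y, u, u']) = (y' :: Z ++ [y]) ++ [u, u'] := by simp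
    rw [this, List.nodup_append]
    refine ⟨hnd, by simp [huu'.ne], ?_⟩
    have hsub : ∀ x ∈ y' :: Z ++ [y], x ∈ W ∪ I := by
      simp only [List.cons_append, List.mem_cons, List.mem_append, List.not_mem_nil, or_false]
      rintro x (rfl | hx | rfl)
      · exact mem_union_right _ hy'
      · exact hmem x hx
      · exact mem_union_right _ hy
    simp only [List.mem_cons, List.not_mem_nil, or_false]
    rintro x hx _ (rfl | rfl) rfl
    · exact hu (hsub _ hx)
    · exact hu' (hsub _ hx)
  · have : y' :: (Z ++ [y, u, u']) ++ [y'] = (y' :: Z ++ [y]) ++ [u, u', y'] := by simp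
    rw [this]
    refine hch.append (by simp [huu', hu'y']) ?_
    intro x hx
    rw [List.getLast?_concat, Option.mem_some_iff] at hx
    simpa [← hx] using hyu

theorem exists_isChain_forall_adj_mem (s : Finset V) {x : V} (hx : x ∈ s) :
    ∃ a l, (a :: l).Nodup ∧ (a :: l).IsChain G.Adj ∧ (∀ z ∈ a :: l, z ∈ s) ∧
      ∀ w ∈ s, G.Adj a w → w ∈ l := by
  classical
  suffices H : ∀ n a l, #s ≤ n + l.length → (a :: l).Nodup → (a :: l).IsChain G.Adj →
      (∀ z ∈ a :: l, z ∈ s) → ∃ a l, (a :: l).Nodup ∧ (a :: l).IsChain G.Adj ∧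
        (∀ z ∈ a :: l, z ∈ s) ∧ ∀ w ∈ s, G.Adj a w → w ∈ l from
    H #s x [] (by simp) (List.nodup_singleton x) (List.isChain_singleton x) (by simpa using hx)
  intro n
  induction n with
  | zero =>
    intro a l hs hnd _ hsub
    have := card_le_card (s := (a :: l).toFinset) (t := s) fun z hz => hsub z (by simpa using hz)
    rw [List.toFinset_card_of_nodup hnd, List.length_cons] at this
    omega
  | succ n ih =>
    intro a l hs hnd hch hsub
    by_cases hmax : ∀ w ∈ s, G.Adj a w → w ∈ l
    · exact ⟨a, l, hnd, hch, hsub, hmax⟩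
    push Not at hmax
    obtain ⟨w, hws, haw, hwl⟩ := hmax
    refine ih w (a :: l) (by simp; omega) ?_ (List.isChain_cons_cons.mpr ⟨haw.symm, hch⟩) ?_
    · exact List.nodup_cons.mpr ⟨by simp [haw.ne', hwl], hnd⟩
    · simpa [hws] using hsub

theorem colorable_induce_of_forall_exists_card_adj_lt [DecidableRel G.Adj]
    {p : ℕ} (s : Finset V) (h : ∀ t ⊆ s, t.Nonempty → ∃ v ∈ t, #{w ∈ t | G.Adj v w} < p) :
    (G.induce (s : Set V)).Colorable p := by
  classical
  suffices H : ∀ t ⊆ s, ∃ C : V → ℕ, (∀ v ∈ t, C v < p) ∧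
      ∀ v ∈ t, ∀ w ∈ t, G.Adj v w → C v ≠ C w by
    obtain ⟨C, hlt, hC⟩ := H s subset_rfl
    exact ⟨Coloring.mk (fun v => ⟨C v, hlt v v.2⟩)
      fun {v w} hvw => by simpa using hC v v.2 w w.2 hvw⟩
  intro t
  induction t using Finset.strongInduction with
  | H t ih =>
  intro hts
  rcases t.eq_empty_or_nonempty with rfl | hne
  · exact ⟨fun _ => 0, by simp, by simp⟩
  obtain ⟨v, hv, hdeg⟩ := h t hts hne
  obtain ⟨C, hlt, hC⟩ := ih (t.erase v) (erase_ssubset hv) ((erase_subset v t).trans hts)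
  obtain ⟨c, hcp, hc⟩ := exists_mem_notMem_of_card_lt_card
    (s := {w ∈ t | G.Adj v w}.image C) (t := range p) (by simpa using card_image_le.trans_lt hdeg)
  rw [mem_range] at hcp
  have hfresh : ∀ w ∈ t, G.Adj v w → c ≠ C w := fun w hw hvw hcw =>
    hc (mem_image.mpr ⟨w, mem_filter.mpr ⟨hw, hvw⟩, hcw.symm⟩)
  refine ⟨Function.update C v c, fun x hx => ?_, fun x hx w hw hxw => ?_⟩
  · rcases eq_or_ne x v with rfl | hxv
    · simpa using hcp
    · simpa [hxv] using hlt x (mem_erase.mpr ⟨hxv, hx⟩)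
  · rcases eq_or_ne x v with rfl | hxv
    · simpa [hxw.ne'] using hfresh w hw hxw
    rcases eq_or_ne w v with rfl | hwv
    · simpa [hxv] using (hfresh x hx hxw.symm).symm
    simpa [hxv, hwv] using hC x (mem_erase.mpr ⟨hxv, hx⟩) w (mem_erase.mpr ⟨hwv, hw⟩) hxw

theorem colorable_induce_neighborSet [Fintype V] [DecidableRel G.Adj] {p : ℕ}
    (hfree : ¬ G.HasCycleOfLength (p + 2)) (y : V) :
    (G.induce (G.neighborSet y)).Colorable p := by
  classical
  rw [← coe_neighborFinset]
  refine colorable_induce_of_forall_exists_card_adj_lt _ fun t ht ⟨x, hx⟩ => ?_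
  obtain ⟨a, l, hnd, hch, hsub, hmax⟩ := exists_isChain_forall_adj_mem t hx
  refine ⟨a, hsub a List.mem_cons_self, ?_⟩
  by_contra! hp
  have hpl : p ≤ l.length := calc
    p ≤ #{w ∈ t | G.Adj a w} := hp
    _ ≤ #l.toFinset := card_le_card fun w hw => by
      rw [mem_filter] at hw
      exact List.mem_toFinset.mpr (hmax w hw.1 hw.2)
    _ ≤ l.length := List.toFinset_card_le l
  have hadj : ∀ z ∈ a :: l, G.Adj y z := fun z hz => (mem_neighborFinset _ _ _).mp (ht (hsub z hz))
  have hPsub : (a :: l.take p).Sublist (a :: l) := (List.take_sublist p l).cons_cons a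
  have hlen : (a :: l.take p).length + 1 = p + 2 := by simp [hpl]
  apply hfree
  rw [← hlen]
  refine hasCycleOfLength_of_isChain (a := y) ?_ ?_
  · exact List.nodup_cons.mpr ⟨fun h => G.irrefl (hadj y (hPsub.subset h)), hnd.sublist hPsub⟩
  · rw [List.cons_append, List.cons_append, List.isChain_cons_cons, ← List.cons_append]
    refine ⟨hadj a List.mem_cons_self, (hch.take (p + 1)).append (List.isChain_singleton y) ?_⟩
    intro z hz w hw
    rw [List.head?_cons, Option.mem_some_iff] at hw
    exact hw ▸ (hadj z (hPsub.subset (List.mem_of_getLast? hz))).symm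

theorem colorable_of_forall_induce_colorable {ι : Type*} [Fintype ι] {p : ℕ} (S : ι → Set V)
    (hS : ∀ v, ∃ i, v ∈ S i) (h : ∀ i, (G.induce (S i)).Colorable p) :
    G.Colorable (Fintype.card ι * p) := by
  choose sel hsel using hS
  let C i := (h i).some
  -- stated for `i = j` so that `rfl` can merge the two dependent subtypes
  have key : ∀ {v w} i j, i = j → ∀ (hv : v ∈ S i) (hw : w ∈ S j), G.Adj v w →
      C i ⟨v, hv⟩ ≠ C j ⟨w, hw⟩ := by
    rintro v w i _ rfl hv hw hvw
    exact (C i).valid hvw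
  have := (Coloring.mk (fun v => (sel v, C (sel v) ⟨v, hsel v⟩)) fun {v w} hvw heq =>
    key _ _ (Prod.ext_iff.mp heq).1 _ _ hvw (Prod.ext_iff.mp heq).2).colorable
  simpa using this

theorem colorable_induce_of_isCompleteBetween [Fintype V] [DecidableEq V] [DecidableRel G.Adj]
    {k : ℕ} (hk : 2 ≤ k) (hfree : ¬ G.HasCycleOfLength (2 * k + 1)) {W I : Finset V}
    (hWI : G.IsCompleteBetween W I) (hW : k ≤ #W + 1) (hI : k ≤ #I) :
    (G.induce {u | u ∉ W ∪ I ∧ ∃ y ∈ I, G.Adj y u}).Colorable (2 * k - 1) := by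
  have hfree' : ¬ G.HasCycleOfLength (2 * k - 1 + 2) := by
    rwa [show 2 * k - 1 + 2 = 2 * k + 1 by omega]
  let C y := (colorable_induce_neighborSet hfree' y).some
  -- colour `u` as in `N(sel u)`; an edge `uu'` with `sel u ≠ sel u'` closes a `(2k+1)`-cycle
  choose sel hselI hsel using fun u : {u | u ∉ W ∪ I ∧ ∃ y ∈ I, G.Adj y u} => u.2.2
  have key : ∀ {u u'} y y', y = y' → ∀ (hu : G.Adj y u) (hu' : G.Adj y' u'), G.Adj u u' →
      C y ⟨u, hu⟩ ≠ C y' ⟨u', hu'⟩ := by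
    rintro u u' y _ rfl hu hu' huu'
    exact (C y).valid huu'
  refine ⟨Coloring.mk (fun u => C (sel u) ⟨u, hsel u⟩) fun {u u'} huu' => key _ _ ?_ _ _ huu'⟩
  by_contra hne
  exact hfree (hasCycleOfLength_of_isCompleteBetween hk hWI hW hI (hselI u) (hselI u') hne
    (hsel u) huu' (hsel u').symm u.2.1 u'.2.1)

section Counting

variable [Fintype V] [DecidableRel G.Adj]

theorem sum_card_filter_adj_eq_sum_degree (J : Finset V) :
    ∑ w, #{y ∈ J | G.Adj w y} = ∑ y ∈ J, G.degree y := by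
  have := sum_card_bipartiteAbove_eq_sum_card_bipartiteBelow (s := univ) (t := J) (r := G.Adj)
  simp only [bipartiteAbove, bipartiteBelow] at this
  simp [this, ← card_neighborFinset_eq_degree, neighborFinset_eq_filter, adj_comm]

theorem exists_notMem_le_card_filter_adj (J E : Finset V) (hE : #E < Fintype.card V) :
    ∃ w ∉ E, (∑ y ∈ J, (G.degree y : ℝ)) - #E * #J ≤ Fintype.card V * #{y ∈ J | G.Adj w y} := by
  classical
  set X := (∑ y ∈ J, (G.degree y : ℝ)) - #E * #J
  set f : V → ℝ := fun w => #{y ∈ J | G.Adj w y}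
  have hne : (univ \ E).Nonempty := by
    rw [← card_pos, card_sdiff_of_subset (subset_univ E), card_univ]; omega
  have hsum : X ≤ ∑ w ∈ univ \ E, f w := by
    have htot : ∑ w, f w = ∑ y ∈ J, (G.degree y : ℝ) := by
      simp only [f]; exact_mod_cast sum_card_filter_adj_eq_sum_degree J
    have hE : ∑ w ∈ E, f w ≤ #E * #J := by
      simpa using sum_le_card_nsmul E f #J fun w _ => by simpa [f] using card_filter_le J _
    have := sum_sdiff (f := f) (subset_univ E)
    simp only [X]; linarith
  by_contra! h
  have hlt := sum_lt_sum_of_nonempty hne fun w hw => h w (mem_sdiff.mp hw).2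
  rw [← mul_sum, sum_const, nsmul_eq_mul] at hlt
  have hcard : ((univ \ E).card : ℝ) ≤ Fintype.card V := by exact_mod_cast card_le_univ _
  obtain ⟨w, hw⟩ := hne
  have hf : 0 ≤ f w := Nat.cast_nonneg _
  have hX : 0 < X := (mul_nonneg (Nat.cast_nonneg _) hf).trans_lt (h w (mem_sdiff.mp hw).2)
  nlinarith

theorem exists_isCompleteBetween_card_ge {ε : ℝ}
    (hdeg : ∀ v, ε * Fintype.card V ≤ G.degree v) (J : Finset V) (i : ℕ)
    (hi : (i : ℝ) ≤ ε * Fintype.card V / 2) :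
    ∃ W I : Finset V, #W = i ∧ I ⊆ J ∧ G.IsCompleteBetween W I ∧ (ε / 2) ^ i * #J ≤ #I := by
  classical
  induction i with
  | zero => exact ⟨∅, J, rfl, subset_rfl, by simp [IsCompleteBetween], by simp⟩
  | succ i ih =>
  push_cast at hi
  obtain ⟨W, I, hW, hIJ, hWI, hI⟩ := ih (by linarith)
  set n := Fintype.card V
  have hεn : ε * n ≤ n := by
    rcases isEmpty_or_nonempty V with hV | ⟨⟨v⟩⟩
    · simp [n]
    · exact (hdeg v).trans (by exact_mod_cast (G.degree_lt_card_verts v).le)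
  have hn : (0 : ℝ) < n := by linarith
  obtain ⟨w, hwW, hw⟩ := exists_notMem_le_card_filter_adj (G := G) I W (by
    rw [hW]; exact_mod_cast (show (i : ℝ) < n by linarith))
  have hdegI : ε * n * #I ≤ ∑ y ∈ I, (G.degree y : ℝ) := by
    simpa [mul_comm] using card_nsmul_le_sum I (fun y => (G.degree y : ℝ)) _ fun y _ => hdeg y
  have hstep : ε / 2 * #I ≤ #{y ∈ I | G.Adj w y} := by
    rw [hW] at hw
    refine le_of_mul_le_mul_left ?_ hn
    nlinarith [(Nat.cast_nonneg #I : (0 : ℝ) ≤ #I)]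
  refine ⟨insert w W, {y ∈ I | G.Adj w y}, by rw [card_insert_of_notMem hwW, hW],
    (filter_subset _ _).trans hIJ, fun x hx y hy => ?_, ?_⟩
  · rcases mem_insert.mp hx with rfl | hx
    · exact (mem_filter.mp hy).2
    · exact hWI hx (mem_filter.mp hy).1
  · have hε : 0 ≤ ε := by nlinarith
    calc (ε / 2) ^ (i + 1) * #J = ε / 2 * ((ε / 2) ^ i * #J) := by ring
      _ ≤ ε / 2 * #I := by gcongr
      _ ≤ _ := hstep

end Counting

theorem colorable_of_forall_exists_adj_of_isCompleteBetween [Fintype V] [DecidableRel G.Adj]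
    {k : ℕ} (hk : 2 ≤ k) (hfree : ¬ G.HasCycleOfLength (2 * k + 1)) (M : Finset V)
    {W I : V → Finset V} (hW : ∀ v, #(W v) = k - 1) (hIN : ∀ v, I v ⊆ G.neighborFinset v)
    (hWI : ∀ v, G.IsCompleteBetween (W v) (I v)) (hIk : ∀ v, k ≤ #(I v))
    (hcover : ∀ u, ∃ v ∈ M, ∃ y ∈ I v, G.Adj y u) :
    G.Colorable (#M * 3 * (2 * k - 1)) := by
  classical
  let S : M × Fin 3 → Set V := fun p =>
    ![(W p.1 : Set V), I p.1, {u | u ∉ W p.1 ∪ I p.1 ∧ ∃ y ∈ I p.1, G.Adj y u}] p.2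
  have := colorable_of_forall_induce_colorable (G := G) (p := 2 * k - 1) S ?_ ?_
  · simpa [mul_assoc] using this
  · intro u
    obtain ⟨v, hvM, y, hyv, hyu⟩ := hcover u
    by_cases huW : u ∈ W v
    · exact ⟨(⟨v, hvM⟩, 0), huW⟩
    by_cases huI : u ∈ I v
    · exact ⟨(⟨v, hvM⟩, 1), huI⟩
    · exact ⟨(⟨v, hvM⟩, 2), by simp [huW, huI], y, hyv, hyu⟩
  · rintro ⟨⟨v, -⟩, j⟩
    fin_cases j
    · refine (colorable_of_fintype _).mono ?_
      simp [S, hW v]; omega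
    · have hfree' : ¬ G.HasCycleOfLength (2 * k - 1 + 2) := by
        rwa [show 2 * k - 1 + 2 = 2 * k + 1 by omega]
      refine (colorable_induce_neighborSet hfree' v).of_hom (induceHomOfLE G ?_).toHom
      intro y hy
      simpa using hIN v hy
    · exact colorable_induce_of_isCompleteBetween (W := W v) hk hfree (hWI v)
        (by rw [hW v]; omega) (hIk v)

theorem exists_colorable_of_forall_le_degree [Fintype V] [DecidableRel G.Adj] {k : ℕ} {ε : ℝ}
    (hk : 2 ≤ k) (hfree : ¬ G.HasCycleOfLength (2 * k + 1))
    (hdeg : ∀ v, ε * Fintype.card V ≤ G.degree v) (hkε : (k : ℝ) ≤ ε * Fintype.card V / 2)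
    (hkI : (k : ℝ) ≤ (ε / 2) ^ (k - 1) * ε * Fintype.card V) :
    ∃ m : ℕ, m * ((ε / 2) ^ (k - 1) * ε) ≤ 1 ∧ G.Colorable (m * 3 * (2 * k - 1)) := by
  classical
  set n := Fintype.card V
  have hk' : (2 : ℝ) ≤ k := by exact_mod_cast hk
  have hεn : 0 < ε * n := by linarith
  have hn : (0 : ℝ) < n := Nat.cast_pos.mpr (Nat.pos_of_ne_zero fun h => by simp [h] at hεn)
  have hε : 0 < ε := pos_of_mul_pos_left hεn hn.le
  choose W I hW hIN hWI hIcard using fun v => exists_isCompleteBetween_card_ge hdeg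
    (G.neighborFinset v) (k - 1) (by rw [Nat.cast_sub (by omega)]; linarith)
  have hIσ v : (ε / 2) ^ (k - 1) * ε * n ≤ #(I v) := by
    refine le_trans ?_ (hIcard v)
    rw [mul_assoc, card_neighborFinset_eq_degree]
    gcongr
    exact hdeg v
  have hIk v : k ≤ #(I v) := by exact_mod_cast hkI.trans (hIσ v)
  obtain ⟨M, hMdisj, hMcov⟩ := exists_pairwiseDisjoint_forall_not_disjoint I
    fun v => card_pos.mp (by have := hIk v; omega)
  refine ⟨#M, ?_, colorable_of_forall_exists_adj_of_isCompleteBetween hk hfree M hW hIN hWI hIk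
    fun u => ?_⟩
  · have hsum : (#M : ℝ) * ((ε / 2) ^ (k - 1) * ε * n) ≤ n := calc
      _ ≤ ∑ v ∈ M, (#(I v) : ℝ) := by
        simpa using card_nsmul_le_sum M (fun v => (#(I v) : ℝ)) _ fun v _ => hIσ v
      _ = #(M.biUnion I) := by rw [card_biUnion hMdisj]; push_cast; rfl
      _ ≤ n := by exact_mod_cast card_le_univ _
    rw [← mul_assoc] at hsum
    nlinarith
  · obtain ⟨v, hvM, hvu⟩ := hMcov u
    obtain ⟨y, hyu, hyv⟩ := not_disjoint_iff.mp hvu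
    exact ⟨v, hvM, y, hyv, ((mem_neighborFinset _ _ _).mp (hIN u hyu)).symm⟩

end SimpleGraph

/-- For every `ε > 0` and integer `k ≥ 2` there is a constant `c ≥ 1` such that every
finite simple graph with chromatic number at least `c` and minimum degree at least
`ε·|V(G)|` contains a cycle of length `2k + 1` as a subgraph. -/
theorem odd_cycle_of_large_chromatic_and_min_degree
    (ε : ℝ) (hε : 0 < ε) (k : ℕ) (hk : 2 ≤ k) :
    ∃ c : ℕ, 1 ≤ c ∧
      ∀ (n : ℕ) (G : SimpleGraph (Fin n)),
        (c : ℕ∞) ≤ G.chromaticNumber →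
        (∀ v : Fin n, ε * (n : ℝ) ≤ (Nat.card {u : Fin n // G.Adj v u} : ℝ)) →
        ∃ f : ZMod (2 * k + 1) → Fin n, Function.Injective f ∧
          ∀ i : ZMod (2 * k + 1), G.Adj (f i) (f (i + 1)) := by
  classical
  set σ := (ε / 2) ^ (k - 1) * ε
  have hσ : 0 < σ := by positivity
  -- `c` exceeds the colour bound `3(2k-1)/σ`, and `n ≥ χ(G) ≥ c` makes `n` large enough
  set c := ⌈2 * (k : ℝ) / ε⌉₊ + ⌈(k : ℝ) / σ⌉₊ + ⌈3 * ((2 * k - 1 : ℕ) : ℝ) / σ⌉₊ + 1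
  refine ⟨c, by omega, fun n G hχ hdeg => ?_⟩
  by_contra hfree
  have hcn : c ≤ n := by
    have : (c : ℕ∞) ≤ n := hχ.trans (by simpa using G.colorable_of_fintype.chromaticNumber_le)
    exact_mod_cast this
  have hkε : (k : ℝ) ≤ ε * Fintype.card (Fin n) / 2 := by
    have := Nat.ceil_le.mp (show ⌈2 * (k : ℝ) / ε⌉₊ ≤ n by omega)
    rw [div_le_iff₀ hε] at this
    simp; linarith
  have hkI : (k : ℝ) ≤ σ * Fintype.card (Fin n) := by
    have := Nat.ceil_le.mp (show ⌈(k : ℝ) / σ⌉₊ ≤ n by omega)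
    rw [div_le_iff₀ hσ] at this
    simp; linarith
  obtain ⟨m, hm, hcol⟩ := SimpleGraph.exists_colorable_of_forall_le_degree hk hfree (fun v => by
      simpa [← SimpleGraph.card_neighborFinset_eq_degree, SimpleGraph.neighborFinset_eq_filter,
        Nat.card_eq_fintype_card, Fintype.card_subtype] using hdeg v) hkε hkI
  have hmc : m * 3 * (2 * k - 1) ≤ ⌈3 * ((2 * k - 1 : ℕ) : ℝ) / σ⌉₊ := by
    refine Nat.cast_le.mp (le_trans ?_ (Nat.le_ceil _))
    rw [le_div_iff₀ hσ]
    push_cast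
    nlinarith [(Nat.cast_nonneg (2 * k - 1) : (0 : ℝ) ≤ (2 * k - 1 : ℕ))]
  have : (c : ℕ∞) ≤ (m * 3 * (2 * k - 1) : ℕ) := hχ.trans hcol.chromaticNumber_le
  norm_cast at this
  omega
end

section
/- For each integer k ≥ 2 there exists an ε > 0 such that for all integers n and c there exists a digraph D without loops or parallel arcs with |V(D)| ≥ n, χ(D) ≥ c, and minimum out-degree at least ε·|V(D)|, such that D does not contain a directed k-cycle as a subdigraph. -/
/-- A digraph `D` (given by its arc relation `E`) contains the digraph given by the
arc relation `F` as a subdigraph: there is an injective map of the vertices preserving arcs. -/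
def ContainsDigraph {V W : Type*} (E : V → V → Prop) (F : W → W → Prop) : Prop :=
  ∃ f : W → V, Function.Injective f ∧ ∀ u v : W, F u v → E (f u) (f v)

/-- The orientation of the `k`-cycle determined by `o : ZMod k → Bool`:
the edge `i` of the cycle joins `i` and `i + 1`, and is oriented `i → i + 1`
when `o i = true`, and `i + 1 → i` when `o i = false`. -/
def cycleOrient {k : ℕ} (o : ZMod k → Bool) : ZMod k → ZMod k → Prop :=
  fun u v => (o u = true ∧ v = u + 1) ∨ (o v = false ∧ u = v + 1)

/-- The arc obtained by orienting the edge `i` of the `k`-cycle according to `o`.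
Injectivity of `cycleArc o` says that distinct edges yield distinct arcs, i.e. the
orientation is a genuine digraph without parallel arcs (this is automatic for `k ≥ 3`). -/
def cycleArc {k : ℕ} (o : ZMod k → Bool) (i : ZMod k) : ZMod k × ZMod k :=
  if o i then (i, i + 1) else (i + 1, i)


private lemma fin_sub_val_of_le' {N : ℕ} [NeZero N] (a b : Fin N) (h : b.val ≤ a.val) :
    (a - b).val = a.val - b.val := by
  rw [Fin.sub_def]
  simp only []
  have hb := b.isLt
  have ha := a.isLt
  have hh : (N - b.val) + a.val = N + (a.val - b.val) := by omega
  rw [hh, Nat.add_mod_left, Nat.mod_eq_of_lt (by omega)]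

private lemma fin_cast_sub' {N : ℕ} [NeZero N] (a b : Fin N) :
    ((a - b).val : ZMod N) = (a.val : ZMod N) - (b.val : ZMod N) := by
  rw [Fin.sub_def]
  simp only []
  rw [ZMod.natCast_mod, Nat.cast_add, Nat.cast_sub b.isLt.le, ZMod.natCast_self]
  ring

open Classical in
/-- The number of blocks of the orientation of the `k`-cycle given by `o`:
a directed cycle has a single block, and otherwise the blocks (maximal directed
subpaths) correspond bijectively to the indices `i` at which the orientation
changes between the consecutive edges `i` and `i + 1`. -/
noncomputable def blockCount {k : ℕ} (o : ZMod k → Bool) : ℕ :=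
  if ∀ i, o i = o 0 then 1 else {i : ZMod k | o i ≠ o (i + 1)}.ncard

/-- The orientation of the `k`-cycle given by `o` has a block of length one, i.e.
some edge `i + 1` is a maximal directed subpath on its own. -/
def hasShortBlock {k : ℕ} (o : ZMod k → Bool) : Prop :=
  ∃ i : ZMod k, o i ≠ o (i + 1) ∧ o (i + 1) ≠ o (i + 2)

/-- Theorem 3.1. For each integer `k ≥ 2` there exists `ε > 0` such that for all
integers `n` and `c` there is a digraph `D` without loops or parallel arcs with
`|V(D)| ≥ n`, `χ(D) ≥ c`, and minimum out-degree at least `ε·|V(D)|`, which does not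
contain a directed `k`-cycle (the orientation of the `k`-cycle with all edges oriented
forward) as a subdigraph. -/
theorem counterexample_directed_cycle (k : ℕ) (hk : 2 ≤ k) :
    ∃ ε : ℝ, 0 < ε ∧ ∀ n c : ℕ,
      ∃ (N : ℕ) (E : Fin N → Fin N → Prop),
        (∀ v, ¬ E v v) ∧ n ≤ N ∧
        (c : ℕ∞) ≤ (SimpleGraph.fromRel E).chromaticNumber ∧
        (∀ v : Fin N, ε * (N : ℝ) ≤ (Nat.card {u : Fin N // E v u} : ℝ)) ∧
        ¬ ContainsDigraph E (cycleOrient (fun _ : ZMod k => true)) := by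
  refine ⟨1 / (2 * k), by positivity, fun n c => ?_⟩
  set t : ℕ := max n c + 1 with ht
  set N : ℕ := k * t + 1 with hN
  have htt : t ≤ k * t := Nat.le_mul_of_pos_left t (by omega)
  haveI : NeZero N := ⟨by omega⟩
  have ht1N : t + 1 ≤ N := by omega
  refine ⟨N, fun v u => 1 ≤ (u - v).val ∧ (u - v).val ≤ t, ?_, by omega, ?_, ?_, ?_⟩
  · intro v hv
    simp [sub_self] at hv
  · -- chromatic number
    set s : Finset (Fin N) :=
      Finset.map ⟨Fin.castLE ht1N, Fin.castLE_injective ht1N⟩ Finset.univ with hs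
    have hcard : s.card = t + 1 := by simp [hs]
    have hmem : ∀ u : Fin N, u ∈ s → u.val ≤ t := by
      intro u hu
      rw [hs, Finset.mem_map] at hu
      obtain ⟨a, -, ha⟩ := hu
      have : u.val = a.val := by rw [← ha]; rfl
      omega
    have hclique : (SimpleGraph.fromRel
        (fun v u : Fin N => 1 ≤ (u - v).val ∧ (u - v).val ≤ t)).IsClique s := by
      intro u hu w hw hne
      have hu' := hmem u hu
      have hw' := hmem w hw
      have hvne : u.val ≠ w.val := fun h => hne (Fin.ext h)
      rw [SimpleGraph.fromRel_adj]
      refine ⟨hne, ?_⟩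
      rcases Nat.lt_or_ge u.val w.val with hlt | hge
      · left
        rw [fin_sub_val_of_le' w u hlt.le]
        omega
      · right
        rw [fin_sub_val_of_le' u w (by omega)]
        omega
    rw [SimpleGraph.chromaticNumber]
    refine le_iInf₂ fun m hm => ?_
    have hle := hclique.card_le_of_colorable hm
    rw [hcard] at hle
    exact_mod_cast le_trans (by omega : c ≤ t + 1) hle
  · -- out-degree
    intro v
    have hinj : t ≤ Nat.card {u : Fin N // 1 ≤ (u - v).val ∧ (u - v).val ≤ t} := by
      have hlt : ∀ j : Fin t, j.val + 1 < N := fun j => by have := j.isLt; omega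
      have hE : ∀ j : Fin t, 1 ≤ ((v + ⟨j.val + 1, hlt j⟩) - v).val ∧
          ((v + ⟨j.val + 1, hlt j⟩) - v).val ≤ t := by
        intro j
        rw [add_sub_cancel_left]
        have := j.isLt
        exact ⟨by simp, by simp⟩
      have key := Nat.card_le_card_of_injective
        (fun j : Fin t => (⟨v + ⟨j.val + 1, hlt j⟩, hE j⟩ :
          {u : Fin N // 1 ≤ (u - v).val ∧ (u - v).val ≤ t}))
        (fun j₁ j₂ h => by
          have h' := Subtype.ext_iff.mp h
          simp only at h'
          have h2 := add_left_cancel h'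
          have hv : j₁.val + 1 = j₂.val + 1 := congrArg Fin.val h2
          exact Fin.ext (by omega))
      simpa using key
    have h2 : (N : ℝ) ≤ 2 * k * t := by
      have : N ≤ 2 * (k * t) := by omega
      exact_mod_cast (by push_cast; linarith [show (N:ℝ) ≤ 2*(k*t) from by exact_mod_cast this])
    calc (1 / (2 * k) : ℝ) * N ≤ t := by
          rw [div_mul_eq_mul_div, one_mul, div_le_iff₀ (by positivity)]
          linarith
      _ ≤ _ := by exact_mod_cast hinj
  · -- no directed k-cycle
    rintro ⟨f, -, hf⟩
    haveI : NeZero k := ⟨by omega⟩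
    have harc : ∀ i : ZMod k, 1 ≤ (f (i + 1) - f i).val ∧ (f (i + 1) - f i).val ≤ t :=
      fun i => hf i (i + 1) (Or.inl ⟨rfl, rfl⟩)
    have hsum0 : ((∑ i : ZMod k, (f (i + 1) - f i).val : ℕ) : ZMod N) = 0 := by
      rw [Nat.cast_sum]
      calc ∑ i : ZMod k, ((f (i + 1) - f i).val : ZMod N)
          = ∑ i : ZMod k, (((f (i + 1)).val : ZMod N) - ((f i).val : ZMod N)) :=
            Finset.sum_congr rfl fun i _ => fin_cast_sub' _ _
        _ = 0 := by
            rw [Finset.sum_sub_distrib, sub_eq_zero]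
            exact Fintype.sum_equiv (Equiv.addRight (1 : ZMod k)) _ _ (fun i => rfl)
    have hdvd : N ∣ ∑ i : ZMod k, (f (i + 1) - f i).val :=
      (ZMod.natCast_eq_zero_iff _ _).mp hsum0
    have hlow : k ≤ ∑ i : ZMod k, (f (i + 1) - f i).val := by
      calc k = ∑ _i : ZMod k, 1 := by simp [ZMod.card]
        _ ≤ _ := Finset.sum_le_sum fun i _ => (harc i).1
    have hhigh : ∑ i : ZMod k, (f (i + 1) - f i).val ≤ k * t := by
      calc ∑ i : ZMod k, (f (i + 1) - f i).val ≤ ∑ _i : ZMod k, t :=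
            Finset.sum_le_sum fun i _ => (harc i).2
        _ = k * t := by simp [ZMod.card]
    have := Nat.le_of_dvd (by omega) hdvd
    omega
end

section
/- Let k ≥ 2 and ℓ ≥ 1 be integers, and let D be the digraph with vertex set (ℤ/(k+1)ℤ) × {1,…,ℓ} in which (i,j) → (i,j′) is an arc whenever j < j′, and (i,j) → (i+1,j′) is an arc for all j, j′ (addition of indices modulo k+1), and there are no other arcs. Then D has chromatic number at least ℓ, every vertex of D has out-degree at least ℓ, and D contains no directed k-cycle as a subdigraph. -/
/-- The directed `(k+1)`-cycle with each vertex blown up into a transitive tournament on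
`ℓ` vertices: the vertex set is `ZMod (k+1) × Fin ℓ`, with an arc `(i, j) → (i, j')`
whenever `j < j'` and an arc `(i, j) → (i + 1, j')` for all `j, j'`. -/
def blowupRel (k ℓ : ℕ) : (ZMod (k + 1) × Fin ℓ) → (ZMod (k + 1) × Fin ℓ) → Prop :=
  fun p q => (q.1 = p.1 ∧ p.2 < q.2) ∨ q.1 = p.1 + 1

/-- The blown-up directed `(k+1)`-cycle has chromatic number at least `ℓ`, every vertex
has out-degree at least `ℓ`, and it contains no directed `k`-cycle as a subdigraph. -/
theorem blowup_cycle_properties (k ℓ : ℕ) (hk : 2 ≤ k) (hℓ : 1 ≤ ℓ) :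
    (ℓ : ℕ∞) ≤ (SimpleGraph.fromRel (blowupRel k ℓ)).chromaticNumber ∧
    (∀ v : ZMod (k + 1) × Fin ℓ, ℓ ≤ Nat.card {u // blowupRel k ℓ v u}) ∧
    ¬ ContainsDigraph (blowupRel k ℓ) (cycleOrient (fun _ : ZMod k => true)) := by
  haveI : NeZero k := ⟨by omega⟩
  haveI : Fact (1 < k + 1) := ⟨by omega⟩
  refine ⟨?_, ?_, ?_⟩
  · -- chromatic number ≥ ℓ, via the clique {(0, j) : j}
    by_contra hlt
    push_neg at hlt
    have hcf : (SimpleGraph.fromRel (blowupRel k ℓ)).CliqueFree ℓ :=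
      SimpleGraph.cliqueFree_of_chromaticNumber_lt hlt
    have hinj : Function.Injective (fun j : Fin ℓ => ((0 : ZMod (k + 1)), j)) := by
      intro a b h
      simpa using congrArg Prod.snd h
    refine hcf ((Finset.univ : Finset (Fin ℓ)).map ⟨_, hinj⟩) ⟨?_, by simp⟩
    intro p hp q hq hpq
    simp only [Finset.coe_map, Set.mem_image, Finset.coe_univ, Set.image_univ,
      Set.mem_range] at hp hq
    obtain ⟨a, rfl⟩ := hp
    obtain ⟨b, rfl⟩ := hq
    refine SimpleGraph.fromRel_adj _ _ _ |>.2 ⟨hpq, ?_⟩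
    have hab : a ≠ b := fun h => hpq (by rw [h])
    rcases lt_or_gt_of_ne hab with h | h
    · exact Or.inl (Or.inl ⟨rfl, h⟩)
    · exact Or.inr (Or.inl ⟨rfl, h⟩)
  · -- out-degree ≥ ℓ
    intro v
    have hinj : Function.Injective
        (fun j : Fin ℓ => (⟨(v.1 + 1, j), Or.inr rfl⟩ : {u // blowupRel k ℓ v u})) := by
      intro a b h
      simpa using congrArg (fun u => u.1.2) h
    simpa using Nat.card_le_card_of_injective _ hinj
  · -- no directed k-cycle
    rintro ⟨f, -, hf⟩
    have h : ∀ i : ZMod k, blowupRel k ℓ (f i) (f (i + 1)) :=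
      fun i => hf i (i + 1) (Or.inl ⟨rfl, rfl⟩)
    set d : ZMod k → ZMod (k + 1) := fun i => (f (i + 1)).1 - (f i).1 with hd_def
    have hd : ∀ i, d i = 0 ∨ d i = 1 := by
      intro i
      rcases h i with ⟨h1, -⟩ | h1
      · exact Or.inl (by simp [hd_def, h1])
      · exact Or.inr (by simp [hd_def, h1])
    have hsum : ∑ i : ZMod k, d i = 0 := by
      have hre : ∑ i : ZMod k, (f (i + 1)).1 = ∑ i : ZMod k, (f i).1 :=
        Fintype.sum_equiv (Equiv.addRight 1) _ _ (fun i => rfl)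
      simp [hd_def, Finset.sum_sub_distrib, hre]
    have hsplit : ∑ i : ZMod k, d i = ∑ i : ZMod k, if d i = 1 then (1 : ZMod (k + 1)) else 0 :=
      Finset.sum_congr rfl fun i _ => by rcases hd i with h1 | h1 <;> simp [h1]
    have hcard : ((Finset.univ.filter (fun i : ZMod k => d i = 1)).card : ZMod (k + 1)) = 0 := by
      rw [← Finset.sum_boole, ← hsplit, hsum]
    have hdvd : (k + 1) ∣ (Finset.univ.filter (fun i : ZMod k => d i = 1)).card :=
      (ZMod.natCast_eq_zero_iff _ _).1 hcard
    have hle : (Finset.univ.filter (fun i : ZMod k => d i = 1)).card ≤ k := by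
      simpa [ZMod.card] using Finset.card_filter_le (Finset.univ : Finset (ZMod k))
        (fun i => d i = 1)
    have hzero : (Finset.univ.filter (fun i : ZMod k => d i = 1)).card = 0 := by
      by_contra hne
      have := Nat.le_of_dvd (Nat.pos_of_ne_zero hne) hdvd
      omega
    have hd0 : ∀ i, d i = 0 := by
      intro i
      rcases hd i with h1 | h1
      · exact h1
      · exfalso
        have : i ∈ Finset.univ.filter (fun i : ZMod k => d i = 1) := by simp [h1]
        rw [Finset.card_eq_zero] at hzero
        simp [hzero] at this
    have hlt : ∀ i : ZMod k, (f i).2 < (f (i + 1)).2 := by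
      intro i
      have heq : (f (i + 1)).1 = (f i).1 := by
        have := hd0 i
        simp [hd_def, sub_eq_zero] at this
        exact this
      rcases h i with ⟨-, h2⟩ | h1
      · exact h2
      · exfalso
        rw [heq] at h1
        exact one_ne_zero (left_eq_add.mp h1)
    obtain ⟨i₀, hi₀⟩ := Finite.exists_max (fun i : ZMod k => (f i).2)
    exact (hlt i₀).not_ge (hi₀ (i₀ + 1))
end

section
/- Let k ≥ 3 be a fixed integer and let D be a digraph without loops or parallel arcs that does not contain any digraph in 𝒞_k ∪ 𝒞′_k as a subdigraph. Then for any vertex v ∈ V(D), the digraph D′ obtained from D by cloning v does not contain any digraph in 𝒞_k ∪ 𝒞′_k as a subdigraph either. -/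
/-- The digraph given by the arc relation `E` contains, as a subdigraph, a member of
`𝒞_k ∪ 𝒞'_k`: i.e. an orientation of a cycle of length `ℓ` with `2 ≤ ℓ ≤ k` (a genuine
digraph, whence the injectivity of `cycleArc o`) which either is a directed cycle
(a single block) or consists of exactly two blocks, one of which has length one. -/
def ContainsFamilyCk (k : ℕ) {V : Type*} (E : V → V → Prop) : Prop :=
  ∃ (ℓ : ℕ) (o : ZMod ℓ → Bool), 2 ≤ ℓ ∧ ℓ ≤ k ∧
    Function.Injective (cycleArc o) ∧
    (blockCount o = 1 ∨ (blockCount o = 2 ∧ hasShortBlock o)) ∧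
    ContainsDigraph E (cycleOrient o)

/-- The digraph obtained from `E` by cloning the vertex `v`: the new vertex (`none`) has
the same in- and out-neighbourhood as `v`, and is not adjacent to `v`. -/
def cloneRel {V : Type*} (E : V → V → Prop) (v : V) : Option V → Option V → Prop
  | some a, some b => E a b
  | some a, none => E a v
  | none, some b => E v b
  | none, none => False

/-! Identifying the clone with `v` (`Option.getD v`) maps `D'` onto `D`, so a copy in `D'` of a
member of `𝒞_k ∪ 𝒞'_k` yields one in `D` unless it passes through both `v` and its clone. These two
vertices are not adjacent on the cycle, as `D` has no loops, so they cut it into two paths of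
length at least two. A member of the family changes orientation nowhere or exactly at two adjacent
vertices, so one of the two paths is directed, and since its ends have the same image in `D` it
becomes a directed cycle of length less than `ℓ ≤ k` there. -/

lemma cloneRel_getD {V : Type*} {E : V → V → Prop} {v : V} {x y : Option V}
    (h : cloneRel E v x y) : E (x.getD v) (y.getD v) := by
  cases x <;> cases y <;> simp_all [cloneRel]

lemma Option.injOn_getD_compl_none {V : Type*} (v : V) :
    Set.InjOn (fun x : Option V => x.getD v) {none}ᶜ := by
  rintro (_ | x) hx (_ | y) hy h <;> simp_all

lemma Option.injOn_getD_compl_some {V : Type*} (v : V) :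
    Set.InjOn (fun x : Option V => x.getD v) {some v}ᶜ := by
  rintro (_ | x) hx (_ | y) hy h <;> simp_all

lemma natCast_inj_of_lt {ℓ i j : ℕ} (hi : i < ℓ) (hj : j < ℓ) :
    (i : ZMod ℓ) = j ↔ i = j := by
  rw [ZMod.natCast_eq_natCast_iff', Nat.mod_eq_of_lt hi, Nat.mod_eq_of_lt hj]

section Cycle

variable {ℓ : ℕ} {o : ZMod ℓ → Bool}

lemma rel_or_rel_succ_of_cycleOrient {α : Type*} {R : α → α → Prop} {f : ZMod ℓ → α}
    (hf : ∀ u w, cycleOrient o u w → R (f u) (f w)) (i : ZMod ℓ) :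
    R (f i) (f (i + 1)) ∨ R (f (i + 1)) (f i) := by
  cases h : o i
  · exact .inr (hf _ _ (.inr ⟨h, rfl⟩))
  · exact .inl (hf _ _ (.inl ⟨h, rfl⟩))

lemma eq_or_adjacent_of_orientation_changes
    (hblk : blockCount o = 1 ∨ (blockCount o = 2 ∧ hasShortBlock o)) {x y : ZMod ℓ}
    (hx : o x ≠ o (x + 1)) (hy : o y ≠ o (y + 1)) : y = x ∨ y = x + 1 ∨ x = y + 1 := by
  have hnconst : ¬ ∀ i, o i = o 0 := fun h => hx ((h x).trans (h _).symm)
  rw [blockCount, if_neg hnconst] at hblk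
  set S := {i : ZMod ℓ | o i ≠ o (i + 1)}
  rcases hblk with h1 | ⟨h2, i, hi, hi1⟩
  · obtain ⟨z, hz⟩ := Set.ncard_eq_one.mp h1
    have hxz : x ∈ S := hx
    have hyz : y ∈ S := hy
    rw [hz, Set.mem_singleton_iff] at hxz hyz
    exact .inl (hyz.trans hxz.symm)
  · have hii : i ≠ i + 1 := fun h => hi (congrArg o h)
    have hS : ({i, i + 1} : Set (ZMod ℓ)) = S := by
      refine Set.eq_of_subset_of_ncard_le ?_ (by rw [h2, Set.ncard_pair hii])
        (Set.finite_of_ncard_ne_zero (by omega))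
      rintro z (rfl | rfl)
      · exact hi
      · simpa [S, add_assoc, one_add_one_eq_two] using hi1
    have hxS : x ∈ S := hx
    have hyS : y ∈ S := hy
    rw [← hS] at hxS hyS
    rcases hxS with rfl | rfl <;> rcases hyS with rfl | rfl <;> simp

lemma constant_on_arc_or_constant_on_arc [NeZero ℓ]
    (hblk : blockCount o = 1 ∨ (blockCount o = 2 ∧ hasShortBlock o)) (a b : ZMod ℓ) :
    (∀ t : ℕ, t + 1 < (a - b).val → o (b + t) = o (b + t + 1)) ∨
      (∀ t : ℕ, t + 1 < (b - a).val → o (a + t) = o (a + t + 1)) := by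
  by_contra! ⟨⟨t₁, ht₁, hx⟩, ⟨t₂, ht₂, hy⟩⟩
  have hab : a - b ≠ 0 := fun h => by simp [h] at ht₁
  set m := (a - b).val with hm
  have hsum : m + (b - a).val = ℓ := by
    rw [← neg_sub, ZMod.neg_val, if_neg hab]
    have := ZMod.val_lt (a - b)
    omega
  have hy' : a + (t₂ : ZMod ℓ) = b + ((m + t₂ : ℕ) : ZMod ℓ) := by
    rw [hm, Nat.cast_add, ZMod.natCast_zmod_val]
    ring
  rw [hy'] at hy
  rcases eq_or_adjacent_of_orientation_changes hblk hx hy with h | h | h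
  · have := (natCast_inj_of_lt (ℓ := ℓ) (i := m + t₂) (j := t₁) (by omega) (by omega)).1
      (add_left_cancel h)
    omega
  · have := (natCast_inj_of_lt (ℓ := ℓ) (i := m + t₂) (j := t₁ + 1) (by omega) (by omega)).1
      (by push_cast at h ⊢; linear_combination h)
    omega
  · have := (natCast_inj_of_lt (ℓ := ℓ) (i := t₁) (j := m + t₂ + 1) (by omega) (by omega)).1
      (by push_cast at h ⊢; linear_combination h)
    omega

variable {V : Type*} {E : V → V → Prop}

lemma containsFamilyCk_of_directedCycle {k d : ℕ} (hd : 2 ≤ d) (hdk : d ≤ k) (c : Bool)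
    (h : ContainsDigraph E (cycleOrient (fun _ : ZMod d => c))) : ContainsFamilyCk k E := by
  refine ⟨d, fun _ => c, hd, hdk, fun i j hij => ?_, .inl (by simp [blockCount]), h⟩
  cases c <;> simp_all [cycleArc, Prod.ext_iff]

lemma containsDigraph_of_constant_arc [NeZero ℓ] {g : ZMod ℓ → V}
    (harc : ∀ u w, cycleOrient o u w → E (g u) (g w)) {a b : ZMod ℓ} {d : ℕ} [NeZero d]
    (hd : d < ℓ) (hba : b + d = a) (hga : g a = g b) (hinj : Set.InjOn g {a}ᶜ)
    (hconst : ∀ t : ℕ, t + 1 < d → o (b + t) = o (b + t + 1)) :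
    ContainsDigraph E (cycleOrient (fun _ : ZMod d => o b)) := by
  set φ : ZMod d → ZMod ℓ := fun j => b + (j.val : ℕ)
  have hφ_inj : Function.Injective φ := fun i j h =>
    ZMod.val_injective d <|
      (natCast_inj_of_lt (i.val_lt.trans hd) (j.val_lt.trans hd)).1 (add_left_cancel h)
  have hφ_ne : ∀ j, φ j ≠ a := fun j h =>
    j.val_lt.ne <| (natCast_inj_of_lt (j.val_lt.trans hd) hd).1 <|
      add_left_cancel (h.trans hba.symm)
  -- at `j = -1` the walk wraps around: `φ j + 1 = b + d = a` and `φ 0 = b` have the same image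
  have hφ_succ : ∀ j, g (φ (j + 1)) = g (φ j + 1) := by
    intro j
    have hj : j + 1 = ((j.val + 1 : ℕ) : ZMod d) := by push_cast; rw [ZMod.natCast_zmod_val]
    rcases Nat.lt_or_ge (j.val + 1) d with hlt | hge
    · simp only [φ, hj, ZMod.val_cast_of_lt hlt]
      push_cast
      ring_nf
    · have hjd : j.val + 1 = d := le_antisymm j.val_lt hge
      simp only [φ, hj, hjd, ZMod.natCast_self, ZMod.val_zero, Nat.cast_zero, add_zero]
      rw [add_assoc, ← Nat.cast_one, ← Nat.cast_add, hjd, hba, hga]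
  have hφ_orient : ∀ j, o (φ j) = o b := by
    suffices h : ∀ t < d, o (b + t) = o b from fun j => h _ j.val_lt
    intro t ht
    induction t with
    | zero => simp
    | succ t ih => rw [Nat.cast_succ, ← add_assoc, ← hconst t ht, ih (by omega)]
  refine ⟨g ∘ φ, fun i j h => hφ_inj (hinj (hφ_ne i) (hφ_ne j) h), ?_⟩
  rintro u w (⟨hc, rfl⟩ | ⟨hc, rfl⟩)
  · simp only [Function.comp_apply, hφ_succ]
    exact harc _ _ (.inl ⟨(hφ_orient u).trans hc, rfl⟩)
  · simp only [Function.comp_apply, hφ_succ]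
    exact harc _ _ (.inr ⟨(hφ_orient w).trans hc, rfl⟩)

lemma containsFamilyCk_of_constant_arc {k : ℕ} [NeZero ℓ] (hloops : ∀ x, ¬ E x x)
    (hℓk : ℓ ≤ k) {g : ZMod ℓ → V} (harc : ∀ u w, cycleOrient o u w → E (g u) (g w))
    {a b : ZMod ℓ} (hab : a ≠ b) (hga : g a = g b) (hinj : Set.InjOn g {a}ᶜ)
    (hconst : ∀ t : ℕ, t + 1 < (a - b).val → o (b + t) = o (b + t + 1)) :
    ContainsFamilyCk k E := by
  have hab₁ : a ≠ b + 1 := by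
    rintro rfl
    rcases rel_or_rel_succ_of_cycleOrient harc b with h | h <;> exact hloops _ (by rwa [hga] at h)
  have hba : b + ((a - b).val : ZMod ℓ) = a := by rw [ZMod.natCast_zmod_val]; ring
  have hd : 2 ≤ (a - b).val := by
    by_contra! h
    interval_cases hv : (a - b).val
    · exact hab (by simpa using hba.symm)
    · exact hab₁ (by simpa using hba.symm)
  have : NeZero (a - b).val := ⟨by omega⟩
  exact containsFamilyCk_of_directedCycle hd ((ZMod.val_lt _).le.trans hℓk) _
    (containsDigraph_of_constant_arc harc (ZMod.val_lt _) hba hga hinj hconst)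

lemma containsFamilyCk_of_pinched_cycle {k : ℕ} [NeZero ℓ] (hloops : ∀ x, ¬ E x x)
    (hℓk : ℓ ≤ k) (hblk : blockCount o = 1 ∨ (blockCount o = 2 ∧ hasShortBlock o))
    {g : ZMod ℓ → V} (harc : ∀ u w, cycleOrient o u w → E (g u) (g w)) {a b : ZMod ℓ}
    (hab : a ≠ b) (hga : g a = g b) (hinj_a : Set.InjOn g {a}ᶜ) (hinj_b : Set.InjOn g {b}ᶜ) :
    ContainsFamilyCk k E := by
  rcases constant_on_arc_or_constant_on_arc hblk a b with h | h
  · exact containsFamilyCk_of_constant_arc hloops hℓk harc hab hga hinj_a h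
  · exact containsFamilyCk_of_constant_arc hloops hℓk harc hab.symm hga.symm hinj_b h

end Cycle

theorem cloning_preserves_family_freeness_general
    (k : ℕ) {V : Type*} (E : V → V → Prop) (hloops : ∀ v, ¬ E v v)
    (hfree : ¬ ContainsFamilyCk k E) (v : V) :
    ¬ ContainsFamilyCk k (cloneRel E v) := by
  rintro ⟨ℓ, o, hℓ, hℓk, hcycleArc, hblk, f, hf, harc⟩
  have : NeZero ℓ := ⟨by omega⟩
  set g : ZMod ℓ → V := fun i => (f i).getD v
  have hgarc : ∀ u w, cycleOrient o u w → E (g u) (g w) := fun u w h => cloneRel_getD (harc u w h)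
  have hinj : ∀ x : Option V, Set.InjOn (·.getD v) {x}ᶜ → Set.InjOn g (f ⁻¹' {x}ᶜ) :=
    fun x hx => hx.comp hf.injOn (Set.mapsTo_preimage _ _)
  by_cases hboth : ∃ a b, f a = none ∧ f b = some v
  · obtain ⟨a, b, ha, hb⟩ := hboth
    have hab : a ≠ b := fun h => by simp [h, hb] at ha
    have hga : g a = g b := by simp [g, ha, hb]
    exact hfree <| containsFamilyCk_of_pinched_cycle hloops hℓk hblk hgarc hab hga
      ((hinj _ (Option.injOn_getD_compl_none v)).mono fun x hx => ha ▸ hf.ne hx)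
      ((hinj _ (Option.injOn_getD_compl_some v)).mono fun x hx => hb ▸ hf.ne hx)
  · push Not at hboth
    have hginj : Set.InjOn g Set.univ := by
      by_cases hnone : ∃ a, f a = none
      · obtain ⟨a, ha⟩ := hnone
        exact (hinj _ (Option.injOn_getD_compl_some v)).mono fun x _ => hboth a x ha
      · push Not at hnone
        exact (hinj _ (Option.injOn_getD_compl_none v)).mono fun x _ => hnone x
    exact hfree ⟨ℓ, o, hℓ, hℓk, hcycleArc, hblk, g, Set.injOn_univ.1 hginj, hgarc⟩

/-- Lemma 3.2. For `k ≥ 3`, if a digraph `D` without loops or parallel arcs contains no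
digraph in `𝒞_k ∪ 𝒞'_k` as a subdigraph, then neither does the digraph obtained from `D`
by cloning any vertex `v`. -/
theorem cloning_preserves_family_freeness
    (k : ℕ) (hk : 3 ≤ k) {V : Type*} (E : V → V → Prop) (hloops : ∀ v, ¬ E v v)
    (hfree : ¬ ContainsFamilyCk k E) (v : V) :
    ¬ ContainsFamilyCk k (cloneRel E v) :=
  cloning_preserves_family_freeness_general k E hloops hfree v
end

section
/- Let k ≥ 3 and m ≥ 2k be integers. Then the digraph G⃗_{2m,2k} does not contain any digraph in 𝒞_k ∪ 𝒞′_k as a subdigraph. -/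
/-- The vertices of the digraph `G⃗_{2m,2k}`: `2k`-tuples of pairwise distinct elements
of a `2m`-element set. -/
def ShiftVert (m k : ℕ) : Type := {a : Fin (2 * k) → Fin (2 * m) // Function.Injective a}

/-- The arc relation of `G⃗_{2m,2k}`: there is an arc from `a` to `b` iff
`a (i + 1) = b i` for all `0 ≤ i < 2k - 1`. -/
def ShiftRel (m k : ℕ) : ShiftVert m k → ShiftVert m k → Prop :=
  fun a b => ∀ i j : Fin (2 * k), (j : ℕ) = (i : ℕ) + 1 → a.1 j = b.1 i

section ShiftWalk

variable {m k : ℕ} {g : ℕ → ShiftVert m k} {d : ℕ}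

theorem ShiftRel.walk_apply (hg : ∀ s < d, ShiftRel m k (g s) (g (s + 1)))
    (t : ℕ) (ht : t + d < 2 * k) : (g d).1 ⟨t, by omega⟩ = (g 0).1 ⟨t + d, ht⟩ := by
  induction d generalizing t with
  | zero => rfl
  | succ d ih =>
    calc (g (d + 1)).1 ⟨t, by omega⟩
        = (g d).1 ⟨t + 1, by omega⟩ := (hg d (by omega) _ _ rfl).symm
      _ = (g 0).1 ⟨t + 1 + d, by omega⟩ := ih (fun s hs => hg s (by omega)) (t + 1) (by omega)
      _ = (g 0).1 ⟨t + (d + 1), ht⟩ := congrArg _ (Fin.ext (by simp only; omega))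

theorem ShiftRel.not_closed_walk (hd : 0 < d) (hdk : d < 2 * k)
    (hg : ∀ s < d, ShiftRel m k (g s) (g (s + 1))) (hcl : g d = g 0) : False := by
  have h := ShiftRel.walk_apply hg 0 (by omega)
  rw [hcl] at h
  have := congrArg Fin.val ((g 0).2 h)
  simp only at this
  omega

theorem ShiftRel.eq_one_of_walk_of_arc (hdk : d < 2 * k)
    (hg : ∀ s < d, ShiftRel m k (g s) (g (s + 1))) (harc : ShiftRel m k (g 0) (g d)) :
    d = 1 := by
  have h := (harc ⟨0, by omega⟩ ⟨1, by omega⟩ rfl).trans (ShiftRel.walk_apply hg 0 (by omega))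
  have := congrArg Fin.val ((g 0).2 h)
  simp only at this
  omega

end ShiftWalk

section CycleOrientation

variable {ℓ : ℕ} {o : ZMod ℓ → Bool}

theorem ZMod.add_natCast_ne_self (a : ZMod ℓ) {n : ℕ} (hn : 0 < n) (hnℓ : n < ℓ) :
    a + n ≠ a := by
  rw [Ne, add_eq_left, ZMod.natCast_eq_zero_iff]
  exact fun h => absurd (Nat.le_of_dvd hn h) (by omega)

theorem ZMod.sub_natCast_ne_self (a : ZMod ℓ) {n : ℕ} (hn : 0 < n) (hnℓ : n < ℓ) :
    a - n ≠ a := by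
  rw [Ne, sub_eq_self, ZMod.natCast_eq_zero_iff]
  exact fun h => absurd (Nat.le_of_dvd hn h) (by omega)

/-- Going once around the cycle from `c + 1` crosses every edge except `c`. -/
theorem eq_of_forall_ne_eq_succ [NeZero ℓ] (c : ZMod ℓ) (h : ∀ j ≠ c, o j = o (j + 1))
    (j : ZMod ℓ) : o j = o c := by
  have run : ∀ t < ℓ, o (c + 1 + t) = o (c + 1) := by
    intro t ht
    induction t with
    | zero => simp
    | succ t ih =>
      have hne : c + 1 + t ≠ c := by
        rw [add_assoc, ← Nat.cast_one, ← Nat.cast_add]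
        exact ZMod.add_natCast_ne_self c (by omega) (by omega)
      rw [Nat.cast_succ, ← add_assoc, ← h _ hne, ih (by omega)]
  have hall : ∀ j, o j = o (c + 1) := fun j => by
    simpa using run (j - (c + 1)).val (ZMod.val_lt _)
  rw [hall j, hall c]

theorem eq_of_blockCount_eq_one [NeZero ℓ] (h : blockCount o = 1) (j : ZMod ℓ) : o j = o 0 := by
  by_contra hj
  have hnc : ¬ ∀ j, o j = o 0 := fun hc => hj (hc j)
  rw [blockCount, if_neg hnc, Set.ncard_eq_one] at h
  obtain ⟨c, hc⟩ := h
  have hsucc : ∀ j ≠ c, o j = o (j + 1) := fun j hjc => by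
    by_contra hne
    have hj : j ∈ ({c} : Set (ZMod ℓ)) := hc ▸ hne
    exact hjc hj
  exact hnc fun j =>
    (eq_of_forall_ne_eq_succ c hsucc j).trans (eq_of_forall_ne_eq_succ c hsucc 0).symm

/-- An orientation with two blocks, one of length one, is a directed cycle with a single arc
reversed. -/
theorem exists_forall_ne_of_blockCount_eq_two [NeZero ℓ] (h : blockCount o = 2)
    (hs : hasShortBlock o) : ∃ a, ∀ j ≠ a, o j ≠ o a := by
  obtain ⟨i, hi, hi'⟩ := hs
  rw [← one_add_one_eq_two, ← add_assoc] at hi'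
  have hne : i ≠ i + 1 := fun h => hi (congrArg o h)
  have hne' : i + 1 + 1 ≠ i + 1 := fun h => hne (add_right_cancel h).symm
  have hnc : ¬ ∀ j, o j = o 0 := fun hc => hi ((hc i).trans (hc (i + 1)).symm)
  rw [blockCount, if_neg hnc] at h
  have hchanges : {i, i + 1} = {j : ZMod ℓ | o j ≠ o (j + 1)} := by
    refine Set.eq_of_subset_of_ncard_le ?_ (by rw [h, Set.ncard_pair hne]) (Set.toFinite _)
    rintro j (rfl | rfl)
    exacts [hi, hi']
  have hsucc : ∀ j ∉ ({i, i + 1} : Set (ZMod ℓ)), o j = o (j + 1) := fun j hj => by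
    by_contra hne
    exact hj (hchanges ▸ hne)
  -- reversing the short block back leaves at most one change of direction, at `i`
  set o' := Function.update o (i + 1) (o i) with ho'
  have hsucc' : ∀ j ≠ i, o' j = o' (j + 1) := by
    intro j hji
    by_cases hj : j = i + 1
    · subst hj
      rw [ho', Function.update_self, Function.update_of_ne hne']
      revert hi hi'
      cases o i <;> cases o (i + 1) <;> cases o (i + 1 + 1) <;> simp
    · rw [ho', Function.update_of_ne hj, Function.update_of_ne (mt add_right_cancel hji)]
      exact hsucc j (by simp [hji, hj])
  refine ⟨i + 1, fun j hj => ?_⟩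
  have hj' := eq_of_forall_ne_eq_succ i hsucc' j
  rw [ho', Function.update_of_ne hj, Function.update_of_ne hne] at hj'
  rwa [hj']

theorem cycleArc_not_injective_two {o : ZMod 2 → Bool} {a : ZMod 2} (ha : o (a + 1) ≠ o a) :
    ¬ Function.Injective (cycleArc o) := by
  have h2 : a + 1 + 1 = a := by fin_cases a <;> rfl
  have hne : a + 1 ≠ a := fun h => one_ne_zero (add_eq_left.mp h)
  have hb := Bool.eq_not_iff.mpr ha
  refine fun hinj => hne (hinj ?_)
  cases hoa : o a <;> simp [cycleArc, hoa, hb, h2]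

theorem cycleOrient_of_true {j : ZMod ℓ} (h : o j = true) : cycleOrient o j (j + 1) :=
  Or.inl ⟨h, rfl⟩

theorem cycleOrient_of_false {j : ZMod ℓ} (h : o (j - 1) = false) : cycleOrient o j (j - 1) :=
  Or.inr ⟨h, (sub_add_cancel j 1).symm⟩

theorem cycleOrient_walk_add {a : ZMod ℓ} {d : ℕ} (h : ∀ s < d, o (a + s) = true) :
    ∀ s < d, cycleOrient o (a + s) (a + (s + 1 : ℕ)) := fun s hs => by
  rw [Nat.cast_succ, ← add_assoc]
  exact cycleOrient_of_true (h s hs)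

theorem cycleOrient_walk_sub {a : ZMod ℓ} {d : ℕ} (h : ∀ s < d, o (a - (s + 1 : ℕ)) = false) :
    ∀ s < d, cycleOrient o (a - s) (a - (s + 1 : ℕ)) := fun s hs => by
  rw [Nat.cast_succ, ← sub_sub]
  exact cycleOrient_of_false (by rw [sub_sub, ← Nat.cast_succ]; exact h s hs)

end CycleOrientation

section CycleEmbedding

variable {V : Type*} {E : V → V → Prop} {ℓ : ℕ} {o : ZMod ℓ → Bool} {f : ZMod ℓ → V}

theorem exists_closed_walk_of_forall_eq (hf : ∀ u v, cycleOrient o u v → E (f u) (f v))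
    (ho : ∀ j, o j = o 0) : ∃ g : ℕ → V, (∀ s < ℓ, E (g s) (g (s + 1))) ∧ g ℓ = g 0 := by
  cases h0 : o 0
  · refine ⟨fun s => f ((0 : ZMod ℓ) - s),
      fun s hs => hf _ _ (cycleOrient_walk_sub (fun s _ => (ho _).trans h0) s hs), by simp⟩
  · refine ⟨fun s => f ((0 : ZMod ℓ) + s),
      fun s hs => hf _ _ (cycleOrient_walk_add (fun s _ => (ho _).trans h0) s hs), by simp⟩

theorem exists_walk_and_arc_of_forall_ne [NeZero ℓ] {a : ZMod ℓ}
    (hf : ∀ u v, cycleOrient o u v → E (f u) (f v)) (ha : ∀ j ≠ a, o j ≠ o a) :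
    ∃ g : ℕ → V, (∀ s < ℓ - 1, E (g s) (g (s + 1))) ∧ E (g 0) (g (ℓ - 1)) := by
  have hℓ : ((ℓ - 1 : ℕ) : ZMod ℓ) = -1 := by
    rw [Nat.cast_pred (Nat.pos_of_neZero ℓ), ZMod.natCast_self, zero_sub]
  cases hoa : o a
  · refine ⟨fun s => f (a + 1 + s), fun s hs => hf _ _ (cycleOrient_walk_add ?_ s hs), ?_⟩
    · intro s hs
      have hne : a + 1 + s ≠ a := by
        rw [add_assoc, ← Nat.cast_one, ← Nat.cast_add]
        exact ZMod.add_natCast_ne_self a (by omega) (by omega)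
      simpa [hoa] using ha _ hne
    · simp only [Nat.cast_zero, add_zero, hℓ, add_neg_cancel_right]
      have harc : cycleOrient o (a + 1) (a + 1 - 1) :=
        cycleOrient_of_false (by rwa [add_sub_cancel_right])
      rw [add_sub_cancel_right] at harc
      exact hf _ _ harc
  · refine ⟨fun s => f (a - s), fun s hs => hf _ _ (cycleOrient_walk_sub ?_ s hs), ?_⟩
    · intro s hs
      simpa [hoa] using ha _ (ZMod.sub_natCast_ne_self a (n := s + 1) (by omega) (by omega))
    · simp only [Nat.cast_zero, sub_zero, hℓ, sub_neg_eq_add]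
      exact hf _ _ (cycleOrient_of_true hoa)

end CycleEmbedding

theorem shift_digraph_family_free_general (k m : ℕ) :
    ¬ ContainsFamilyCk k (ShiftRel m k) := by
  rintro ⟨ℓ, o, hℓ2, hℓk, hinj, hblocks, f, -, hf⟩
  have : NeZero ℓ := ⟨by omega⟩
  rcases hblocks with h1 | ⟨h2, hshort⟩
  · obtain ⟨g, hg, hcl⟩ := exists_closed_walk_of_forall_eq hf (eq_of_blockCount_eq_one h1)
    exact ShiftRel.not_closed_walk (by omega) (by omega) hg hcl
  · obtain ⟨a, ha⟩ := exists_forall_ne_of_blockCount_eq_two h2 hshort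
    obtain ⟨g, hg, harc⟩ := exists_walk_and_arc_of_forall_ne hf ha
    obtain rfl : ℓ = 2 := by have := ShiftRel.eq_one_of_walk_of_arc (by omega) hg harc; omega
    exact cycleArc_not_injective_two (ha (a + 1) fun h => one_ne_zero (add_eq_left.mp h)) hinj

/-- Claim 3.4. For `k ≥ 3` and `m ≥ 2k`, the digraph `G⃗_{2m,2k}` contains no digraph in
`𝒞_k ∪ 𝒞'_k` as a subdigraph. -/
theorem shift_digraph_family_free (k m : ℕ) (hk : 3 ≤ k) (hm : 2 * k ≤ m) :
    ¬ ContainsFamilyCk k (ShiftRel m k) :=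
  shift_digraph_family_free_general k m
end

section
/- Let k ≥ 3 and m ≥ 2k be integers, and let D′ be the digraph constructed from G⃗_{2m,2k} as follows: for each ordered partition (A,B) of {1,…,2m} with |A| = |B| = m, add two new vertices s_{(A,B)} and t_{(A,B)}; add an arc from every vertex (a_1,…,a_k,b_1,…,b_k) of G⃗_{2m,2k} with a_1,…,a_k ∈ A and b_1,…,b_k ∈ B to s_{(A,B)}, and add an arc from t_{(A,B)} to every such vertex; add a directed path p_1 → p_2 → … → p_k on k new vertices; finally add an arc from every vertex s_{(A,B)} to p_1 and an arc from p_k to every vertex t_{(A,B)}. Then D′ does not contain any digraph in 𝒞_k ∪ 𝒞′_k as a subdigraph. -/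
/-- Ordered partitions `(A, B)` of `{1, …, 2m}` with `|A| = |B| = m`, recorded by the
set `A` (so `B` is the complement of `A`). -/
def HalfPart (m : ℕ) : Type := {A : Finset (Fin (2 * m)) // A.card = m}

/-- The tuple `a = (a₁, …, a_k, b₁, …, b_k)` has its first `k` entries in `A` and its
last `k` entries in `B` (the complement of `A`). -/
def SplitsAB (m k : ℕ) (A : Finset (Fin (2 * m))) (a : Fin (2 * k) → Fin (2 * m)) : Prop :=
  ∀ i : Fin (2 * k), ((i : ℕ) < k → a i ∈ A) ∧ (k ≤ (i : ℕ) → a i ∉ A)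

/-- The digraph `D'` obtained from `G⃗_{2m,2k}` by adding, for each ordered partition
`(A, B)` of `{1, …, 2m}` into halves, a sink vertex `s_{(A,B)}` (second summand) and a
source vertex `t_{(A,B)}` (third summand), together with a directed path
`p₁ → ⋯ → p_k` (fourth summand): every vertex `(a₁,…,a_k,b₁,…,b_k)` with all `aᵢ ∈ A`
and all `bᵢ ∈ B` sends an arc to `s_{(A,B)}` and receives an arc from `t_{(A,B)}`;
every `s_{(A,B)}` sends an arc to `p₁`, and `p_k` sends an arc to every `t_{(A,B)}`. -/
def AugmentedRel (m k : ℕ) :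
    (ShiftVert m k ⊕ (HalfPart m ⊕ (HalfPart m ⊕ Fin k))) →
    (ShiftVert m k ⊕ (HalfPart m ⊕ (HalfPart m ⊕ Fin k))) → Prop
  | Sum.inl a, Sum.inl b => ShiftRel m k a b
  | Sum.inl a, Sum.inr (Sum.inl A) => SplitsAB m k A.1 a.1
  | Sum.inr (Sum.inr (Sum.inl A)), Sum.inl a => SplitsAB m k A.1 a.1
  | Sum.inr (Sum.inl _), Sum.inr (Sum.inr (Sum.inr p)) => (p : ℕ) = 0
  | Sum.inr (Sum.inr (Sum.inr p)), Sum.inr (Sum.inr (Sum.inr q)) => (q : ℕ) = (p : ℕ) + 1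
  | Sum.inr (Sum.inr (Sum.inr p)), Sum.inr (Sum.inr (Sum.inl _)) => (p : ℕ) = k - 1
  | _, _ => False

/-!
An embedded member of `𝒞_k ∪ 𝒞'_k` is either a closed walk of length at most `k` or a directed
path `v₀ → ⋯ → v_n` with `2 ≤ n < k` together with the chord `v₀ → v_n` (the long block of a
two-block cycle, read in its own direction). In `D'` the only way out of `G⃗_{2m,2k}` is through
some `s_{(A,B)}`, after which a walk has to traverse all of `p₁ → ⋯ → p_k`; so short walks between
tuples stay inside `G⃗_{2m,2k}`, where `n` steps shift a tuple by `n` places. A short closed walk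
would then return a tuple of distinct entries to itself after a shift, and a chord would either
repeat an entry (between two tuples) or put the `k`-th entry of some tuple both in `A` and outside
`A` (through `s_{(A,B)}` or `t_{(A,B)}`). A chord at any other vertex duplicates one of the forced
arcs around `p₁ → ⋯ → p_k`, making the path revisit a vertex.
-/

open Function

section Walks

variable {V : Type*}

def IsWalk (E : V → V → Prop) (g : ℕ → V) (n : ℕ) : Prop :=
  ∀ j < n, E (g j) (g (j + 1))

def HasClosedWalk (E : V → V → Prop) (ℓ : ℕ) : Prop :=
  ∃ x : ZMod ℓ → V, ∀ i, E (x i) (x (i + 1))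

def HasChordedPath (E : V → V → Prop) (n : ℕ) : Prop :=
  ∃ g : ℕ → V, Set.InjOn g (Set.Iic n) ∧ IsWalk E g n ∧ E (g 0) (g n)

variable {E : V → V → Prop} {g : ℕ → V} {n ℓ : ℕ}

lemma IsWalk.mono (hg : IsWalk E g n) {n' : ℕ} (h : n' ≤ n) : IsWalk E g n' :=
  fun j hj => hg j (by omega)

lemma IsWalk.tail (hg : IsWalk E g n) : IsWalk E (fun j => g (j + 1)) (n - 1) :=
  fun j hj => hg (j + 1) (by omega)

lemma IsWalk.last (hg : IsWalk E g n) (hn : 0 < n) : E (g (n - 1)) (g n) := by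
  simpa [Nat.sub_add_cancel hn] using hg (n - 1) (by omega)

lemma HasClosedWalk.of_flip (h : HasClosedWalk (flip E) ℓ) : HasClosedWalk E ℓ := by
  obtain ⟨x, hx⟩ := h
  refine ⟨fun i => x (-i), fun i => ?_⟩
  simpa [flip, neg_add, sub_eq_add_neg, add_comm] using hx (-i - 1)

lemma HasChordedPath.of_flip (h : HasChordedPath (flip E) n) : HasChordedPath E n := by
  obtain ⟨g, hinj, hwalk, hchord⟩ := h
  refine ⟨fun j => g (n - j), fun i hi j hj hij => ?_, fun j hj => ?_, by simpa [flip] using hchord⟩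
  · have := hinj (Set.mem_Iic.2 (Nat.sub_le n i)) (Set.mem_Iic.2 (Nat.sub_le n j)) hij
    simp only [Set.mem_Iic] at hi hj
    omega
  · have := hwalk (n - (j + 1)) (by omega)
    rwa [show n - (j + 1) + 1 = n - j by omega] at this

-- `cond b E (flip E)` is `E` read forwards or backwards: it lets the two directions of a block
-- be handled at once.
lemma cond_not_iff_cond_swap (b : Bool) (u v : V) :
    cond (!b) E (flip E) u v ↔ cond b E (flip E) v u := by
  cases b <;> rfl

lemma HasClosedWalk.of_cond {b : Bool} (h : HasClosedWalk (cond b E (flip E)) ℓ) :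
    HasClosedWalk E ℓ := by
  cases b
  exacts [h.of_flip, h]

lemma HasChordedPath.of_cond {b : Bool} (h : HasChordedPath (cond b E (flip E)) n) :
    HasChordedPath E n := by
  cases b
  exacts [h.of_flip, h]

end Walks

lemma ZMod.natCast_ne_zero_of_lt {ℓ c : ℕ} (h0 : 0 < c) (h : c < ℓ) : (c : ZMod ℓ) ≠ 0 := by
  rw [Ne, ZMod.natCast_eq_zero_iff]
  exact Nat.not_dvd_of_pos_of_lt h0 h

section Orientations

variable {V : Type*} {E : V → V → Prop} {ℓ : ℕ}

lemma cond_of_cycleOrient {o : ZMod ℓ → Bool} {f : ZMod ℓ → V}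
    (hf : ∀ u v, cycleOrient o u v → E (f u) (f v)) (e : ZMod ℓ) :
    cond (o e) E (flip E) (f e) (f (e + 1)) := by
  cases h : o e
  · exact hf _ _ (Or.inr ⟨h, rfl⟩)
  · exact hf _ _ (Or.inl ⟨h, rfl⟩)

/-- The orientation changes telescope to zero in `ZMod 2`, so there is an even number of them. -/
lemma ncard_setOf_ne_add_one_ne_one [NeZero ℓ] (o : ZMod ℓ → Bool) :
    {i : ZMod ℓ | o i ≠ o (i + 1)}.ncard ≠ 1 := by
  classical
  let c : ZMod ℓ → ZMod 2 := fun i => if o i then 1 else 0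
  have hterm : ∀ i, c (i + 1) - c i = if o i ≠ o (i + 1) then 1 else 0 := by
    intro i
    simp only [c]
    cases o i <;> cases o (i + 1) <;> decide
  have hsum : ∑ i, (c (i + 1) - c i) = 0 := by
    rw [Finset.sum_sub_distrib, sub_eq_zero]
    exact Fintype.sum_equiv (Equiv.addRight 1) _ _ fun _ => rfl
  simp only [hterm, Finset.sum_boole] at hsum
  rw [Set.ncard_eq_toFinset_card', Set.toFinset_ofPred]
  intro h
  rw [h] at hsum
  exact absurd hsum (by decide)

lemma ne_two_of_injective_cycleArc {o : ZMod ℓ → Bool} (hinj : Injective (cycleArc o))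
    {i : ZMod ℓ} (h : o i ≠ o (i + 1)) : ℓ ≠ 2 := by
  rintro rfl
  have hi : i + 1 + 1 = i := by fin_cases i <;> rfl
  have hne : i ≠ i + 1 := fun e => h (by rw [← e])
  refine hne (hinj ?_)
  cases hi0 : o i <;> cases hi1 : o (i + 1) <;> simp_all [cycleArc]

lemma exists_long_block [NeZero ℓ] {o : ZMod ℓ → Bool}
    (h2 : {i : ZMod ℓ | o i ≠ o (i + 1)}.ncard = 2) (hshort : hasShortBlock o) :
    ∃ j, o (j - 1) = !o j ∧ ∀ c < ℓ - 1, o (j + c) = o j := by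
  obtain ⟨i, hi, hi1⟩ := hshort
  have hne : i ≠ i + 1 := fun h => hi (by rw [← h])
  have hchanges : {i, i + 1} = {i : ZMod ℓ | o i ≠ o (i + 1)} := by
    refine Set.eq_of_subset_of_ncard_le ?_ (by rw [h2, Set.ncard_pair hne]) (Set.toFinite _)
    rintro _ (rfl | rfl)
    exacts [hi, by simpa [add_assoc, one_add_one_eq_two] using hi1]
  refine ⟨i + 2, by simpa [one_add_one_eq_two.symm, ← add_assoc] using Bool.eq_not.2 hi1, ?_⟩
  intro c hc
  induction c with
  | zero => simp
  | succ c ih =>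
    have hcS : i + 2 + c ∉ {i : ZMod ℓ | o i ≠ o (i + 1)} := by
      rw [← hchanges]
      rintro (h | h)
      · exact ZMod.natCast_ne_zero_of_lt (ℓ := ℓ) (c := c + 2) (by omega) (by omega)
          (by push_cast; linear_combination h)
      · exact ZMod.natCast_ne_zero_of_lt (ℓ := ℓ) (c := c + 1) (by omega) (by omega)
          (by push_cast; linear_combination (Set.mem_singleton_iff.1 h))
    rw [Set.mem_ofPred_eq, not_not] at hcS
    rw [Nat.cast_succ, ← add_assoc, ← hcS, ih (by omega)]

lemma hasChordedPath_of_cycle [NeZero ℓ] {f : ZMod ℓ → V} (hf : Injective f) (j : ZMod ℓ)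
    (hpath : ∀ c < ℓ - 1, E (f (j + c)) (f (j + c + 1))) (hchord : E (f j) (f (j - 1))) :
    HasChordedPath E (ℓ - 1) := by
  have hℓ : 0 < ℓ := Nat.pos_of_neZero ℓ
  refine ⟨fun c => f (j + c), fun c hc d hd hcd => ?_, fun c hc => ?_, ?_⟩
  · simp only [Set.mem_Iic] at hc hd
    have := (ZMod.natCast_eq_natCast_iff' c d ℓ).1 (add_left_cancel (hf hcd))
    rwa [Nat.mod_eq_of_lt (by omega), Nat.mod_eq_of_lt (by omega)] at this
  · simpa [add_assoc] using hpath c hc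
  · simpa [Nat.cast_sub (Nat.one_le_of_lt hℓ), sub_eq_add_neg] using hchord

theorem ContainsFamilyCk.hasClosedWalk_or_hasChordedPath {k : ℕ} (h : ContainsFamilyCk k E) :
    (∃ ℓ, 0 < ℓ ∧ ℓ ≤ k ∧ HasClosedWalk E ℓ) ∨ ∃ n, 2 ≤ n ∧ n < k ∧ HasChordedPath E n := by
  obtain ⟨ℓ, o, hℓ2, hℓk, hinj, hblocks, f, hfinj, hf⟩ := h
  have : NeZero ℓ := ⟨by omega⟩
  by_cases hconst : ∀ i, o i = o 0
  · refine .inl ⟨ℓ, by omega, hℓk, HasClosedWalk.of_cond (b := o 0) ⟨f, fun i => ?_⟩⟩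
    simpa [hconst i] using cond_of_cycleOrient hf i
  simp only [blockCount, if_neg hconst] at hblocks
  obtain h1 | ⟨h2, hshort⟩ := hblocks
  · exact absurd h1 (ncard_setOf_ne_add_one_ne_one o)
  have hℓ2 : ℓ ≠ 2 := ne_two_of_injective_cycleArc hinj hshort.choose_spec.1
  obtain ⟨j, hj, hrun⟩ := exists_long_block h2 hshort
  refine .inr ⟨ℓ - 1, by omega, by omega, HasChordedPath.of_cond (b := o j) ?_⟩
  refine hasChordedPath_of_cycle hfinj j (fun c hc => ?_) ?_
  · simpa [hrun c hc] using cond_of_cycleOrient hf (j + c)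
  · simpa [hj, cond_not_iff_cond_swap] using cond_of_cycleOrient hf (j - 1)

end Orientations

abbrev AugVert (m k : ℕ) : Type := ShiftVert m k ⊕ (HalfPart m ⊕ (HalfPart m ⊕ Fin k))

section Augmented

variable {m k : ℕ}

local notation "sVert" A => (Sum.inr (Sum.inl A) : AugVert m k)
local notation "tVert" A => (Sum.inr (Sum.inr (Sum.inl A)) : AugVert m k)
-- `pVert c` is the paper's `p_{c+1}`.
local notation "pVert" c => (Sum.inr (Sum.inr (Sum.inr c)) : AugVert m k)

namespace AugmentedRel

variable {v w : AugVert m k}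

lemma of_inl {a : ShiftVert m k} (h : AugmentedRel m k (.inl a) v) :
    (∃ b, v = .inl b) ∨ ∃ A, v = sVert A := by
  rcases v with b | A | A | p
  exacts [.inl ⟨b, rfl⟩, .inr ⟨A, rfl⟩, h.elim, h.elim]

lemma of_sVert {A : HalfPart m} (h : AugmentedRel m k (sVert A) v) :
    ∃ p : Fin k, v = (pVert p) ∧ (p : ℕ) = 0 := by
  rcases v with b | B | B | p
  exacts [h.elim, h.elim, h.elim, ⟨p, rfl, h⟩]

lemma of_pVert {p : Fin k} (hp : (p : ℕ) + 1 < k) (h : AugmentedRel m k (pVert p) v) :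
    ∃ q : Fin k, v = (pVert q) ∧ (q : ℕ) = p + 1 := by
  rcases v with b | B | B | q
  · exact h.elim
  · exact h.elim
  · have : (p : ℕ) = k - 1 := h
    omega
  · exact ⟨q, rfl, h⟩

lemma of_tVert {A : HalfPart m} (h : AugmentedRel m k (tVert A) v) :
    ∃ a, v = .inl a ∧ SplitsAB m k A.1 a.1 := by
  rcases v with b | B | B | q
  exacts [⟨b, rfl, h⟩, h.elim, h.elim, h.elim]

lemma to_sVert {A : HalfPart m} (h : AugmentedRel m k v (sVert A)) :
    ∃ a, v = .inl a ∧ SplitsAB m k A.1 a.1 := by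
  rcases v with b | B | B | q
  exacts [⟨b, rfl, h⟩, h.elim, h.elim, h.elim]

lemma to_pVert_zero {p : Fin k} (hp : (p : ℕ) = 0) (h : AugmentedRel m k v (pVert p)) :
    ∃ A, v = sVert A := by
  rcases v with b | B | B | q
  · exact h.elim
  · exact ⟨B, rfl⟩
  · exact h.elim
  · have : (p : ℕ) = q + 1 := h
    omega

lemma to_pVert {p : Fin k} (hp : 0 < (p : ℕ)) (h : AugmentedRel m k v (pVert p)) :
    ∃ q : Fin k, v = (pVert q) ∧ (q : ℕ) + 1 = p := by
  rcases v with b | B | B | q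
  · exact h.elim
  · have : (p : ℕ) = 0 := h
    omega
  · exact h.elim
  · exact ⟨q, rfl, (h : (p : ℕ) = q + 1).symm⟩

lemma to_tVert {A : HalfPart m} (h : AugmentedRel m k v (tVert A)) : ∃ p, v = pVert p := by
  rcases v with b | B | B | q
  exacts [h.elim, h.elim, h.elim, ⟨q, rfl⟩]

lemma eq_pVert_of_rel {p : Fin k} (h : AugmentedRel m k (pVert p) w) (h' : AugmentedRel m k v w) :
    v = pVert p := by
  rcases w with b | B | B | q
  · exact h.elim
  · exact h.elim
  · obtain ⟨r, rfl⟩ := h'.to_tVert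
    rw [show r = p from Fin.ext ((h' : (r : ℕ) = k - 1).trans (h : (p : ℕ) = k - 1).symm)]
  · have hqp : (q : ℕ) = p + 1 := h
    obtain ⟨r, rfl, hr⟩ := h'.to_pVert (by omega)
    rw [show r = p from Fin.ext (by omega)]

end AugmentedRel

namespace IsWalk

variable {g : ℕ → AugVert m k} {n : ℕ}

lemma eq_pVert_of_sVert (hg : IsWalk (AugmentedRel m k) g n) {q : ℕ} {A : HalfPart m}
    (hq : g q = sVert A) {d : ℕ} (hd : d < k) (hdn : q + d < n) :
    g (q + d + 1) = pVert ⟨d, hd⟩ := by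
  induction d with
  | zero =>
    have h := hg q (by omega)
    rw [hq] at h
    obtain ⟨p, hp, hp0⟩ := h.of_sVert
    rw [hp, show p = ⟨0, hd⟩ from Fin.ext hp0]
  | succ d ih =>
    have h := hg (q + d + 1) (by omega)
    rw [ih (by omega) (by omega)] at h
    obtain ⟨p, hp, hpd⟩ := h.of_pVert hd
    rw [show q + (d + 1) + 1 = q + d + 1 + 1 by omega, hp, show p = ⟨d + 1, hd⟩ from Fin.ext hpd]

/-- Leaving `G⃗_{2m,2k}` through some `s_{(A,B)}` forces a walk along `p₁ → ⋯ → p_k`, so a short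
walk between two vertices of `G⃗_{2m,2k}` never leaves it. -/
lemma exists_inl (hg : IsWalk (AugmentedRel m k) g n) (hn : n ≤ k + 1)
    (h0 : ∃ a, g 0 = .inl a) (hn' : ∃ b, g n = .inl b) : ∀ j ≤ n, ∃ a, g j = .inl a := by
  obtain ⟨b, hb⟩ := hn'
  intro j hj
  induction j with
  | zero => exact h0
  | succ j ih =>
    obtain ⟨a, ha⟩ := ih (by omega)
    have h := hg j (by omega)
    rw [ha] at h
    obtain hinl | ⟨A, hA⟩ := h.of_inl
    · exact hinl
    obtain rfl | hjn := eq_or_ne (j + 1) n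
    · rw [hA] at hb
      cases hb
    · have hp := hg.eq_pVert_of_sVert hA (d := n - j - 2) (by omega) (by omega)
      rw [show j + 1 + (n - j - 2) + 1 = n by omega, hb] at hp
      cases hp

lemma shiftVert_apply (hg : IsWalk (AugmentedRel m k) g n) (hinl : ∀ j ≤ n, ∃ a, g j = .inl a)
    {a b : ShiftVert m k} (ha : g 0 = .inl a) (hb : g n = .inl b) (i : ℕ) (hi : i + n < 2 * k) :
    b.1 ⟨i, by omega⟩ = a.1 ⟨i + n, hi⟩ := by
  induction n generalizing b i with
  | zero =>
    cases ha.symm.trans hb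
    rfl
  | succ n ih =>
    obtain ⟨c, hc⟩ := hinl n (by omega)
    have hcb := hg n (by omega)
    rw [hc, hb] at hcb
    rw [← (hcb : ShiftRel m k c b) ⟨i, by omega⟩ ⟨i + 1, by omega⟩ rfl,
      ih (hg.mono (by omega)) (fun j hj => hinl j (by omega)) hc (i + 1) (by omega)]
    simp only [show i + 1 + n = i + (n + 1) by omega]

lemma not_splitsAB (hg : IsWalk (AugmentedRel m k) g n) (hinl : ∀ j ≤ n, ∃ a, g j = .inl a)
    {a b : ShiftVert m k} (ha : g 0 = .inl a) (hb : g n = .inl b) (hn : 0 < n) (hnk : n ≤ k)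
    {A : Finset (Fin (2 * m))} (hA : SplitsAB m k A a.1) : ¬ SplitsAB m k A b.1 := by
  intro hB
  have hmem := (hB ⟨k - 1, by omega⟩).1 (by simp only; omega)
  rw [hg.shiftVert_apply hinl ha hb (k - 1) (by omega)] at hmem
  exact (hA ⟨k - 1 + n, by omega⟩).2 (by simp only; omega) hmem

end IsWalk

/-- Walking backwards from `p_c`, or from `t_{(A,B)}`, reaches some `s_{(A',B')}`, and a closed
walk through `s_{(A',B')}` is longer than `k`. -/
lemma exists_inl_of_closedWalk {ℓ : ℕ} [NeZero ℓ] (hℓk : ℓ ≤ k) {x : ZMod ℓ → AugVert m k}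
    (hx : ∀ i, AugmentedRel m k (x i) (x (i + 1))) (q : ZMod ℓ) : ∃ a, x q = .inl a := by
  have hℓ : 0 < ℓ := Nat.pos_of_neZero ℓ
  have hpred : ∀ q, AugmentedRel m k (x (q - 1)) (x q) := fun q => by simpa using hx (q - 1)
  have hs : ∀ q A, x q ≠ sVert A := by
    intro q A hq
    have hwalk : IsWalk (AugmentedRel m k) (fun j : ℕ => x (q + j)) ℓ :=
      fun j _ => by simpa [add_assoc] using hx (q + j)
    have := hwalk.eq_pVert_of_sVert (q := 0) (d := ℓ - 1) (by simpa using hq) (by omega) (by omega)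
    rw [show 0 + (ℓ - 1) + 1 = ℓ by omega] at this
    simp [hq] at this
  have hp : ∀ q (c : ℕ) (hc : c < k), x q ≠ pVert ⟨c, hc⟩ := by
    intro q c
    induction c generalizing q with
    | zero =>
      intro hc hq
      obtain ⟨A, hA⟩ := (hq ▸ hpred q).to_pVert_zero rfl
      exact hs _ _ hA
    | succ c ih =>
      intro hc hq
      obtain ⟨p, hp, hpc⟩ := (hq ▸ hpred q).to_pVert (by simp)
      rw [show p = ⟨c, Nat.lt_of_succ_lt hc⟩ from Fin.ext (by simp only at hpc ⊢; omega)] at hp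
      exact ih (q - 1) _ hp
  rcases hq : x q with a | A | A | p
  · exact ⟨a, rfl⟩
  · exact absurd hq (hs q A)
  · obtain ⟨p, hp'⟩ := (hq ▸ hpred q).to_tVert
    exact absurd hp' (hp _ p p.2)
  · exact absurd hq (hp q p p.2)

theorem augmentedRel_not_hasClosedWalk {ℓ : ℕ} [NeZero ℓ] (hℓk : ℓ ≤ k) :
    ¬ HasClosedWalk (AugmentedRel m k) ℓ := by
  rintro ⟨x, hx⟩
  have hinl := exists_inl_of_closedWalk hℓk hx
  have hwalk : IsWalk (AugmentedRel m k) (fun j : ℕ => x j) ℓ := fun j _ => by simpa using hx j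
  obtain ⟨a, ha⟩ := hinl 0
  have := hwalk.shiftVert_apply (fun j _ => hinl _) (a := a) (b := a) (by simpa using ha)
    (by simpa using ha) 0 (by have := Nat.pos_of_neZero ℓ; omega)
  have := a.2 this
  simp only [Fin.mk.injEq] at this
  exact NeZero.ne ℓ (by omega)

theorem augmentedRel_not_hasChordedPath {n : ℕ} (hn : 2 ≤ n) (hnk : n < k) :
    ¬ HasChordedPath (AugmentedRel m k) n := by
  rintro ⟨g, hinj, hwalk, hchord⟩
  have hinj' : ∀ i ≤ n, ∀ j ≤ n, g i = g j → i = j := fun i hi j hj h => hinj hi hj h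
  rcases hu : g 0 with a | A | A | p <;> rw [hu] at hchord
  · obtain ⟨b, hb⟩ | ⟨B, hB⟩ := hchord.of_inl
    · have hinl := hwalk.exists_inl (by omega) ⟨a, hu⟩ ⟨b, hb⟩
      have h1 := hwalk.shiftVert_apply hinl hu hb 0 (by omega)
      rw [hb] at hchord
      have h2 := (hchord : ShiftRel m k a b) ⟨0, by omega⟩ ⟨1, by omega⟩ rfl
      have := a.2 (h2.trans h1)
      simp only [Fin.mk.injEq] at this
      omega
    · rw [hB] at hchord
      obtain ⟨c, hc, hcB⟩ := (hB ▸ hwalk.last (by omega)).to_sVert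
      have hwalk' := hwalk.mono (Nat.sub_le n 1)
      exact hwalk'.not_splitsAB (hwalk'.exists_inl (by omega) ⟨a, hu⟩ ⟨c, hc⟩) hu hc (by omega)
        (by omega) hchord hcB
  · obtain ⟨p, hp, hp0⟩ := (hu ▸ hwalk 0 (by omega)).of_sVert
    obtain ⟨q, hq, hq0⟩ := hchord.of_sVert
    have := hinj' 1 (by omega) n le_rfl (by rw [hp, hq, Fin.ext (hp0.trans hq0.symm)])
    omega
  · obtain ⟨a, ha, hA⟩ := (hu ▸ hwalk 0 (by omega)).of_tVert
    obtain ⟨b, hb, hbA⟩ := hchord.of_tVert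
    have hb' : g (n - 1 + 1) = .inl b := by rw [Nat.sub_add_cancel (by omega : 1 ≤ n), hb]
    have htail := hwalk.tail
    exact htail.not_splitsAB (htail.exists_inl (by omega) ⟨a, ha⟩ ⟨b, hb'⟩) ha hb' (by omega)
      (by omega) hA hbA
  · have := hinj' (n - 1) (by omega) 0 (by omega)
      (by rw [hu]; exact hchord.eq_pVert_of_rel (hwalk.last (by omega)))
    omega

end Augmented

theorem augmented_digraph_family_free_general (k m : ℕ) :
    ¬ ContainsFamilyCk k (AugmentedRel m k) := by
  intro h
  obtain ⟨ℓ, hℓ, hℓk, hwalk⟩ | ⟨n, hn, hnk, hpath⟩ := h.hasClosedWalk_or_hasChordedPath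
  · have : NeZero ℓ := ⟨hℓ.ne'⟩
    exact augmentedRel_not_hasClosedWalk hℓk hwalk
  · exact augmentedRel_not_hasChordedPath hn hnk hpath

/-- Claim 3.5. For `k ≥ 3` and `m ≥ 2k`, the augmented digraph `D'` contains no digraph
in `𝒞_k ∪ 𝒞'_k` as a subdigraph. -/
theorem augmented_digraph_family_free (k m : ℕ) (hk : 3 ≤ k) (hm : 2 * k ≤ m) :
    ¬ ContainsFamilyCk k (AugmentedRel m k) :=
  augmented_digraph_family_free_general k m
end

section
/- For each integer k ≥ 3 there exists an ε > 0 such that for all integers n and c, and for each orientation C of the k-cycle consisting of exactly two blocks, one of which has length one, there exists a digraph D without loops or parallel arcs with |V(D)| ≥ n, χ(D) ≥ c, and minimum out-degree at least ε·|V(D)|, such that D does not contain a subdigraph isomorphic to C. -/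
/-! The orientation is a directed path of length `k - 1` plus one arc from its first to its last
vertex. The digraph `D` has three parts: the shift digraph on increasing `(k - 1)`-tuples of
`Fin t`, whose chromatic number is unbounded as `t` grows (a `q`-colouring of the `(d + 2)`-tuples
yields a `2 ^ q`-colouring of the `(d + 1)`-tuples); all subsets `A` of `Fin t`, with an arc from a
tuple `u` to `A` when `A` contains the first but not the last entry of `u`; and a blow-up of the
directed `(k - 1)`-cycle entered from every subset. All out-degrees are at least `2 ^ (t - 2)`
while `D` has `O(k 2 ^ t)` vertices. A path of length `k - 1` that enters the blow-up goes once
around the cycle and cannot be short-cut; a path that avoids it runs through the shift digraph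
from `u` to a tuple whose first entry is the last entry of `u`, and these two tuples have no
common out-neighbour. -/

lemma ZMod.forall_ne_of_step {n : ℕ} [NeZero n] {P : ZMod n → Prop} {b : ZMod n}
    (hb : P (b + 1)) (hstep : ∀ l, l + 1 ≠ b → P l → P (l + 1)) : ∀ l ≠ b, P l := by
  have key : ∀ j : ℕ, j + 1 < n → P (b + 1 + j) := by
    intro j hj
    induction j with
    | zero => simpa using hb
    | succ j ih =>
      have hne : b + 1 + j + 1 ≠ b := by
        intro h
        have h0 : ((j + 2 : ℕ) : ZMod n) = 0 := by
          push_cast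
          linear_combination h
        rw [ZMod.natCast_eq_zero_iff] at h0
        exact absurd (Nat.le_of_dvd (by omega) h0) (by omega)
      simpa [add_assoc] using hstep _ hne (ih (by omega))
  intro l hl
  have hl' : l = b + 1 + ((l - (b + 1)).val : ℕ) := by
    rw [ZMod.natCast_zmod_val]
    ring
  rw [hl']
  refine key _ (lt_of_le_of_ne (ZMod.val_lt _) fun h => hl ?_)
  have hn : ((n - 1 : ℕ) : ZMod n) + 1 = 0 := by
    rw [← Nat.cast_add_one, Nat.sub_add_cancel NeZero.one_le, ZMod.natCast_self]
  rw [hl', show (l - (b + 1)).val = n - 1 by omega]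
  linear_combination hn

lemma exists_fin_digraph_of_fintype {V W : Type*} [Fintype V] (E : V → V → Prop)
    (F : W → W → Prop) {ε : ℝ} {n c : ℕ} (hirr : ∀ v, ¬ E v v)
    (hn : n ≤ Fintype.card V)
    (hc : (c : ℕ∞) ≤ (SimpleGraph.fromRel E).chromaticNumber)
    (hdeg : ∀ v, ε * Fintype.card V ≤ Nat.card {u // E v u}) (hF : ¬ ContainsDigraph E F) :
    ∃ (N : ℕ) (E' : Fin N → Fin N → Prop),
      (∀ v, ¬ E' v v) ∧ n ≤ N ∧
      (c : ℕ∞) ≤ (SimpleGraph.fromRel E').chromaticNumber ∧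
      (∀ v : Fin N, ε * (N : ℝ) ≤ (Nat.card {u : Fin N // E' v u} : ℝ)) ∧
      ¬ ContainsDigraph E' F := by
  let e := Fintype.equivFin V
  let φ : SimpleGraph.fromRel E ≃g SimpleGraph.fromRel (fun a b => E (e.symm a) (e.symm b)) :=
    ⟨e, by simp [SimpleGraph.fromRel_adj]⟩
  refine ⟨_, fun a b => E (e.symm a) (e.symm b), fun v => hirr _, hn,
    (SimpleGraph.chromaticNumber_congr φ).symm ▸ hc, fun v => ?_, ?_⟩
  · rw [Nat.card_congr (e.symm.subtypeEquiv fun _ => Iff.rfl)]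
    exact hdeg _
  · rintro ⟨f, hf, hfE⟩
    exact hF ⟨e.symm ∘ f, e.symm.injective.comp hf, hfE⟩

open SimpleGraph

namespace FlippedCycle

lemma exists_flip_of_blockCount_eq_two {k : ℕ} [NeZero k] {o : ZMod k → Bool}
    (hblocks : blockCount o = 2) (hshort : hasShortBlock o) :
    ∃ i, o (i + 1) ≠ o i ∧ ∀ l ≠ i + 1, o l = o i := by
  obtain ⟨i, h1, h2⟩ := hshort
  rw [← one_add_one_eq_two, ← add_assoc] at h2
  refine ⟨i, Ne.symm h1, ?_⟩
  have hnonconst : ¬ ∀ l, o l = o 0 := fun h => h1 ((h i).trans (h (i + 1)).symm)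
  rw [blockCount, if_neg hnonconst] at hblocks
  have hchange : {i, i + 1} = {l | o l ≠ o (l + 1)} := by
    refine Set.eq_of_subset_of_ncard_le ?_ ?_ (Set.toFinite _)
    · rintro l (rfl | rfl)
      exacts [h1, h2]
    · rw [hblocks, Set.ncard_pair fun h => h1 (congrArg o h)]
  refine ZMod.forall_ne_of_step ?_ fun l hl hol => ?_
  · revert h1 h2
    cases o i <;> cases o (i + 1) <;> cases o (i + 1 + 1) <;> simp
  · by_contra hne
    have hmem : l ∈ {l | o l ≠ o (l + 1)} := fun h => hne (h ▸ hol)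
    rcases hchange ▸ hmem with rfl | rfl
    · exact hl rfl
    · exact h1 hol.symm

/-- A homomorphic image of the directed `(L + 1)`-cycle with one arc reversed. -/
def HasShortcutWalk {V : Type*} (E : V → V → Prop) (L : ℕ) : Prop :=
  ∃ g : ℕ → V, (∀ j < L, E (g j) (g (j + 1))) ∧ E (g 0) (g L)

lemma hasShortcutWalk_of_containsDigraph {V : Type*} {E : V → V → Prop} {L : ℕ}
    {o : ZMod (L + 1) → Bool} {i : ZMod (L + 1)} (hflip : o (i + 1) ≠ o i)
    (hrest : ∀ l ≠ i + 1, o l = o i) (h : ContainsDigraph E (cycleOrient o)) :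
    HasShortcutWalk E L := by
  obtain ⟨f, -, hf⟩ := h
  have hne : ∀ j < L, ((j + 1 : ℕ) : ZMod (L + 1)) ≠ 0 := fun j hj h0 => by
    rw [ZMod.natCast_eq_zero_iff] at h0
    exact absurd (Nat.le_of_dvd (by omega) h0) (by omega)
  have hL : (L : ZMod (L + 1)) + 1 = 0 := by exact_mod_cast ZMod.natCast_self (L + 1)
  cases hi : o i
  · -- all arcs but `i + 1 → i + 2` point backwards: walk backwards from `i + 1` to `i + 2`
    refine ⟨fun j => f (i + 1 - j), fun j hj => hf _ _ (Or.inr ⟨?_, ?_⟩),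
      hf _ _ (Or.inl ⟨?_, ?_⟩)⟩
    · rw [hrest _ fun h => hne j hj (by push_cast at h ⊢; linear_combination -h), hi]
    · push_cast
      ring
    · simpa [hi] using hflip
    · linear_combination -hL
  · -- all arcs but `i + 2 → i + 1` point forwards: walk forwards from `i + 2` to `i + 1`
    refine ⟨fun j => f (i + 1 + 1 + j), fun j hj => hf _ _ (Or.inl ⟨?_, ?_⟩),
      hf _ _ (Or.inr ⟨?_, ?_⟩)⟩
    · rw [hrest _ fun h => hne j hj (by push_cast at h ⊢; linear_combination h), hi]
    · push_cast
      ring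
    · rw [show i + 1 + 1 + (L : ZMod (L + 1)) = i + 1 by linear_combination hL]
      simpa [hi] using hflip
    · push_cast
      linear_combination -hL

abbrev ShiftTuple (d t : ℕ) : Type := {u : Fin (d + 1) → Fin t // StrictMono u}

def ShiftAdj {d t : ℕ} (u v : ShiftTuple d t) : Prop :=
  ∃ w : ShiftTuple (d + 1) t, Fin.init w.1 = u.1 ∧ Fin.tail w.1 = v.1

def shiftGraph (d t : ℕ) : SimpleGraph (ShiftTuple d t) := SimpleGraph.fromRel ShiftAdj

def tower : ℕ → ℕ → ℕ
  | 0, q => q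
  | d + 1, q => tower d (2 ^ q)

section ShiftGraph

variable {d t : ℕ}

lemma ShiftAdj.apply_castSucc {u v : ShiftTuple d t} (h : ShiftAdj u v) (i : Fin d) :
    v.1 i.castSucc = u.1 i.succ := by
  obtain ⟨w, hu, hv⟩ := h
  rw [← hu, ← hv]
  rfl

lemma ShiftAdj.head_lt {u v : ShiftTuple d t} (h : ShiftAdj u v) : u.1 0 < v.1 0 := by
  obtain ⟨w, hu, hv⟩ := h
  rw [← hu, ← hv]
  exact w.2 (Fin.castSucc_lt_succ (i := 0))

lemma shiftAdj_of_tail_eq_init {u v : ShiftTuple d t} (h : Fin.tail u.1 = Fin.init v.1)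
    (h0 : u.1 0 < v.1 0) : ShiftAdj u v := by
  refine ⟨⟨Fin.cons (u.1 0) v.1, strictMono_vecCons.2 ⟨h0, v.2⟩⟩, funext fun i => ?_,
    Fin.tail_cons _ _⟩
  induction i using Fin.cases with
  | zero => rfl
  | succ i => exact (congrFun h i).symm

lemma shiftGraph_adj_of_shiftAdj {u v : ShiftTuple d t} (h : ShiftAdj u v) :
    (shiftGraph d t).Adj u v :=
  (fromRel_adj _ _ _).2 ⟨fun huv => (h.head_lt).ne (by rw [huv]), Or.inl h⟩

/-- Colouring a tuple by the set of colours of its extensions by one larger entry turns a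
`q`-colouring of the `(d + 2)`-tuples into a `2 ^ q`-colouring of the `(d + 1)`-tuples. -/
lemma colorable_two_pow_of_colorable_succ {q : ℕ} (h : (shiftGraph (d + 1) t).Colorable q) :
    (shiftGraph d t).Colorable (2 ^ q) := by
  obtain ⟨C⟩ := h
  let C' : ShiftTuple d t → Set (Fin q) :=
    fun u => {a | ∃ w : ShiftTuple (d + 1) t, Fin.init w.1 = u.1 ∧ C w = a}
  have hC' : ∀ u v, ShiftAdj u v → C' u ≠ C' v := by
    rintro u v ⟨w, hwu, hwv⟩ huv
    obtain ⟨w', hw'v, hw'⟩ : C w ∈ C' v := huv ▸ ⟨w, hwu, rfl⟩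
    refine C.valid (shiftGraph_adj_of_shiftAdj (shiftAdj_of_tail_eq_init ?_ ?_)) hw'.symm
    · rw [hwv, hw'v]
    · calc w.1 0 < w.1 1 := w.2 Fin.zero_lt_one
        _ = w'.1 0 := congrFun (hwv.trans hw'v.symm) 0
  let C'' : (shiftGraph d t).Coloring (Set (Fin q)) :=
    Coloring.mk C' fun {u v} huv => by
      rcases ((fromRel_adj _ _ _).1 huv).2 with h | h
      exacts [hC' u v h, (hC' v u h).symm]
  simpa [Fintype.card_set] using C''.colorable

lemma le_of_colorable_shiftGraph_zero {q : ℕ} (h : (shiftGraph 0 t).Colorable q) : t ≤ q := by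
  let f : Fin t → ShiftTuple 0 t :=
    fun a => ⟨fun _ => a, Subsingleton.strictMono (α := Fin 1) _⟩
  have hf : ∀ a b, a < b → (shiftGraph 0 t).Adj (f a) (f b) := fun a b hab =>
    shiftGraph_adj_of_shiftAdj (shiftAdj_of_tail_eq_init (funext fun i => i.elim0) hab)
  simpa using h.card_le_of_pairwise_adj f fun a b hab =>
    (lt_or_gt_of_ne hab).elim (hf a b) fun hba => (hf b a hba).symm

lemma le_tower_of_colorable {q : ℕ} (h : (shiftGraph d t).Colorable q) : t ≤ tower d q := by
  induction d generalizing q with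
  | zero => exact le_of_colorable_shiftGraph_zero h
  | succ d ih => exact ih (colorable_two_pow_of_colorable_succ h)

lemma le_chromaticNumber_shiftGraph {c : ℕ} (h : tower d c < t) :
    (c : ℕ∞) ≤ (shiftGraph d t).chromaticNumber := by
  refine le_chromaticNumber_iff_colorable.2 fun m hm => ?_
  by_contra hmc
  have := le_tower_of_colorable (hm.mono (le_of_lt (by exact_mod_cast not_le.1 hmc)))
  omega

end ShiftGraph

abbrev Vertex (d t s : ℕ) : Type := ShiftTuple d t ⊕ Finset (Fin t) ⊕ ZMod (d + 1) × Fin s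

def Arc {d t s : ℕ} : Vertex d t s → Vertex d t s → Prop
  | .inl u, .inl v => ShiftAdj u v
  | .inl u, .inr (.inl A) => u.1 0 ∈ A ∧ u.1 (Fin.last d) ∉ A
  | .inr (.inl _), .inr (.inr r) => r.1 = 0
  | .inr (.inr r), .inr (.inr r') => r'.1 = r.1 + 1
  | _, _ => False

/-- Subsets sit at level `-1`, so that every arc leaving a subset or the cycle raises the level by
one; the value on tuples is junk. -/
def level {d t s : ℕ} : Vertex d t s → ZMod (d + 1)
  | .inl _ => 0
  | .inr (.inl _) => -1
  | .inr (.inr r) => r.1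

section Construction

variable {d t s : ℕ}

lemma Arc.exists_eq_inr_inr {u v : Vertex d t s} (h : Arc u v) (hu : u.isRight) :
    ∃ r, v = .inr (.inr r) ∧ r.1 = level u + 1 := by
  rcases u with u | A | r <;> rcases v with v | B | r' <;> simp_all [Arc, level]

lemma arc_inr_inr_level_add_one {v : Vertex d t s} (hv : v.isRight) (b : Fin s) :
    Arc v (.inr (.inr (level v + 1, b))) := by
  rcases v with v | A | r <;> simp_all [Arc, level]

lemma isRight_level_of_walk {g : ℕ → Vertex d t s} {m i : ℕ}
    (hg : ∀ j < m, Arc (g j) (g (j + 1))) (hi : (g i).isRight) :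
    ∀ j, i + j ≤ m → (g (i + j)).isRight ∧ level (g (i + j)) = level (g i) + j := by
  intro j hj
  induction j with
  | zero => simp [hi]
  | succ j ih =>
    obtain ⟨hj_right, hj_level⟩ := ih (by omega)
    obtain ⟨r, hr, hr_level⟩ := (hg (i + j) (by omega)).exists_eq_inr_inr hj_right
    rw [← Nat.add_assoc, hr]
    refine ⟨rfl, ?_⟩
    change r.1 = _
    rw [hr_level, hj_level]
    push_cast
    ring

lemma ShiftAdj.apply_of_walk {x : ℕ → ShiftTuple d t} {m : ℕ}
    (hx : ∀ j < m, ShiftAdj (x j) (x (j + 1))) :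
    ∀ j ≤ m, ∀ i (hij : i + j ≤ d),
      (x j).1 ⟨i, by omega⟩ = (x 0).1 ⟨i + j, by omega⟩ := by
  intro j hj
  induction j with
  | zero => intro i _; rfl
  | succ j ih =>
    intro i hij
    calc (x (j + 1)).1 ⟨i, _⟩ = (x j).1 ⟨i + 1, _⟩ :=
          (hx j (by omega)).apply_castSucc ⟨i, by omega⟩
      _ = (x 0).1 ⟨i + 1 + j, _⟩ := ih (by omega) (i + 1) (by omega)
      _ = (x 0).1 ⟨i + (j + 1), _⟩ := by simp only [Nat.add_right_comm i 1 j, Nat.add_assoc]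

lemma not_arc_and_arc_of_head_eq_last (hd : 1 ≤ d) {x u : ShiftTuple d t}
    (hxu : x.1 0 = u.1 (Fin.last d)) (w : Vertex d t s) :
    ¬ (Arc (.inl x) w ∧ Arc (.inl u) w) := by
  rintro ⟨hx, hu⟩
  rcases w with z | A | r
  · have h1 : z.1 0 = u.1 ⟨1, by omega⟩ := by simpa using hu.apply_castSucc ⟨0, hd⟩
    exact lt_irrefl (x.1 0) <| calc
      x.1 0 < z.1 0 := hx.head_lt
      _ = u.1 ⟨1, by omega⟩ := h1
      _ ≤ u.1 (Fin.last d) := u.2.monotone (Fin.le_last _)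
      _ = x.1 0 := hxu.symm
  · exact hu.2 (hxu ▸ hx.1)
  · exact hx

lemma false_of_shortcut_walk_of_isRight (hd : 1 ≤ d) {g : ℕ → Vertex d t s}
    (hwalk : ∀ j < d + 1, Arc (g j) (g (j + 1))) (hshort : Arc (g 0) (g (d + 1)))
    (h0 : (g 0).isRight) : False := by
  obtain ⟨-, hlevel⟩ := isRight_level_of_walk hwalk h0 (d + 1) (by omega)
  obtain ⟨r, hr, hr_level⟩ := hshort.exists_eq_inr_inr h0
  rw [Nat.zero_add, hr] at hlevel
  have h1 : (1 : ZMod (d + 1)) = 0 := by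
    rw [← ZMod.natCast_self (d + 1)]
    exact add_right_injective _ (hr_level.symm.trans hlevel)
  have : Fact (1 < d + 1) := ⟨by omega⟩
  exact one_ne_zero h1

lemma false_of_shortcut_walk_of_inl (hd : 1 ≤ d) {g : ℕ → Vertex d t s}
    (hwalk : ∀ j < d + 1, Arc (g j) (g (j + 1))) (hshort : Arc (g 0) (g (d + 1)))
    {u : ShiftTuple d t} (hu : g 0 = .inl u) : False := by
  -- a walk that leaves the tuples ends on the cycle, where the shortcut from `u` cannot end
  have hleft : ∀ j ≤ d, ¬ (g j).isRight := by
    intro j hj hj_right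
    have hd_right := (isRight_level_of_walk hwalk hj_right (d - j) (by omega)).1
    rw [Nat.add_sub_cancel' hj] at hd_right
    obtain ⟨r, hr, -⟩ := (hwalk d (by omega)).exists_eq_inr_inr hd_right
    rw [hu, hr] at hshort
    exact hshort
  let x : ℕ → ShiftTuple d t := fun j => (g j).elim id fun _ => u
  have hx : ∀ j ≤ d, g j = .inl (x j) := by
    intro j hj
    rcases h : g j with y | y
    · simp [x, h]
    · exact absurd (by simp [h]) (hleft j hj)
  have hx_walk : ∀ j < d, ShiftAdj (x j) (x (j + 1)) := fun j hj => by
    simpa [hx j hj.le, hx (j + 1) hj, Arc] using hwalk j (by omega)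
  have hhead : (x d).1 0 = u.1 (Fin.last d) := by
    simpa [x, hu, Fin.last] using ShiftAdj.apply_of_walk hx_walk d le_rfl 0 (by omega)
  refine not_arc_and_arc_of_head_eq_last hd hhead (g (d + 1)) ⟨?_, hu ▸ hshort⟩
  simpa [hx d le_rfl] using hwalk d (by omega)

lemma not_hasShortcutWalk (hd : 1 ≤ d) :
    ¬ HasShortcutWalk (Arc (d := d) (t := t) (s := s)) (d + 1) := by
  rintro ⟨g, hwalk, hshort⟩
  rcases h0 : g 0 with u | y
  · exact false_of_shortcut_walk_of_inl hd hwalk hshort h0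
  · exact false_of_shortcut_walk_of_isRight hd hwalk hshort (by simp [h0])

lemma min_le_card_arc (hd : 1 ≤ d) (v : Vertex d t s) :
    min (2 ^ (t - 2)) s ≤ Nat.card {w // Arc v w} := by
  classical
  rcases v with u | v
  · refine (min_le_left _ _).trans ?_
    set a := u.1 0
    set b := u.1 (Fin.last d)
    have hab : a ≠ b := (u.2 (by simp [Fin.lt_def]; omega)).ne
    let f : ({a, b}ᶜ : Finset (Fin t)).powerset → {w : Vertex d t s // Arc (.inl u) w} :=
      fun B =>
      ⟨.inr (.inl (insert a B)), Finset.mem_insert_self _ _, fun hb => by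
        rcases Finset.mem_insert.1 hb with h | h
        · exact hab h.symm
        · exact Finset.mem_compl.1 (Finset.mem_powerset.1 B.2 h) (Finset.mem_insert_of_mem
            (Finset.mem_singleton_self b))⟩
    have hf : Function.Injective f := by
      intro B B' h
      have ha : ∀ C : ({a, b}ᶜ : Finset (Fin t)).powerset, a ∉ C.1 := fun C hC => by
        simpa using Finset.mem_powerset.1 C.2 hC
      have h' : insert a B.1 = insert a B'.1 := by simpa [f] using congrArg Subtype.val h
      exact Subtype.ext (by rw [← Finset.erase_insert (ha B), h', Finset.erase_insert (ha B')])
    calc 2 ^ (t - 2) = Nat.card (({a, b}ᶜ : Finset (Fin t)).powerset) := by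
          rw [Nat.card_eq_fintype_card, Fintype.card_coe, Finset.card_powerset,
            Finset.card_compl, Finset.card_pair hab, Fintype.card_fin]
      _ ≤ _ := Nat.card_le_card_of_injective f hf
  · refine (min_le_right _ _).trans ?_
    calc s = Nat.card (Fin s) := (Nat.card_fin s).symm
      _ ≤ _ := Nat.card_le_card_of_injective
          (fun b => ⟨_, arc_inr_inr_level_add_one (v := .inr v) rfl b⟩) fun b b' h => by
            simpa using h

lemma card_vertex_le : Fintype.card (Vertex d t s) ≤ 2 * 2 ^ t + (d + 1) * s := by
  have hX : Fintype.card (ShiftTuple d t) ≤ 2 ^ t := by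
    simpa [Fintype.card_set] using Fintype.card_le_of_injective
      (fun u : ShiftTuple d t => Set.range u.1)
      fun u v h => Subtype.ext ((u.2.range_inj v.2).1 h)
  simp only [Fintype.card_sum, Fintype.card_prod, Fintype.card_finset, ZMod.card,
    Fintype.card_fin]
  omega

lemma card_vertex_le_mul_card_arc (hd : 1 ≤ d) (ht : 2 ≤ t) (v : Vertex d t (2 ^ t)) :
    Fintype.card (Vertex d t (2 ^ t)) ≤ 4 * (d + 3) * Nat.card {w // Arc v w} := by
  have hdeg := min_le_card_arc hd v
  rw [min_eq_left (Nat.pow_le_pow_right two_pos (Nat.sub_le t 2))] at hdeg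
  calc Fintype.card (Vertex d t (2 ^ t)) ≤ 2 * 2 ^ t + (d + 1) * 2 ^ t := card_vertex_le
    _ = 4 * (d + 3) * 2 ^ (t - 2) := by
      rw [← pow_sub_mul_pow 2 ht]
      ring
    _ ≤ _ := Nat.mul_le_mul_left _ hdeg

lemma le_chromaticNumber_fromRel_arc {c : ℕ} (h : tower d c < t) :
    (c : ℕ∞) ≤ (fromRel (Arc (d := d) (t := t) (s := s))).chromaticNumber := by
  let φ : shiftGraph d t →g fromRel (Arc (d := d) (t := t) (s := s)) :=
    ⟨Sum.inl, fun huv => (fromRel_adj _ _ _).2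
      ⟨Sum.inl_injective.ne ((fromRel_adj _ _ _).1 huv).1, ((fromRel_adj _ _ _).1 huv).2⟩⟩
  exact (le_chromaticNumber_shiftGraph h).trans (chromaticNumber_mono_of_hom φ)

end Construction

end FlippedCycle

open FlippedCycle in
/-- Theorem 3.6. For each integer `k ≥ 3` there exists `ε > 0` such that for all
integers `n` and `c`, and for each orientation `C` of the `k`-cycle consisting of
exactly two blocks, one of which has length one, there is a digraph `D` without loops
or parallel arcs with `|V(D)| ≥ n`, `χ(D) ≥ c`, and minimum out-degree at least
`ε·|V(D)|`, which does not contain a subdigraph isomorphic to `C`. -/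
theorem counterexample_flipped_cycle (k : ℕ) (hk : 3 ≤ k) :
    ∃ ε : ℝ, 0 < ε ∧ ∀ n c : ℕ, ∀ o : ZMod k → Bool,
      blockCount o = 2 → hasShortBlock o →
      ∃ (N : ℕ) (E : Fin N → Fin N → Prop),
        (∀ v, ¬ E v v) ∧ n ≤ N ∧
        (c : ℕ∞) ≤ (SimpleGraph.fromRel E).chromaticNumber ∧
        (∀ v : Fin N, ε * (N : ℝ) ≤ (Nat.card {u : Fin N // E v u} : ℝ)) ∧
        ¬ ContainsDigraph E (cycleOrient o) := by
  obtain ⟨d, hd, rfl⟩ : ∃ d, 1 ≤ d ∧ k = d + 2 := ⟨k - 2, by omega, by omega⟩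
  refine ⟨1 / (4 * (d + 3)), by positivity, fun n c o hblocks hshort => ?_⟩
  obtain ⟨i, hflip, hrest⟩ := exists_flip_of_blockCount_eq_two hblocks hshort
  set t := n + tower d c + 2
  refine exists_fin_digraph_of_fintype (Arc (d := d) (t := t) (s := 2 ^ t)) (cycleOrient o)
    (fun v hv => not_hasShortcutWalk hd ⟨fun _ => v, fun _ _ => hv, hv⟩) ?_
    (le_chromaticNumber_fromRel_arc (by omega)) (fun v => ?_)
    (fun h => not_hasShortcutWalk hd (hasShortcutWalk_of_containsDigraph hflip hrest h))
  · calc n ≤ 2 ^ t := (show n ≤ t by omega).trans Nat.lt_two_pow_self.le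
      _ ≤ Fintype.card (Vertex d t (2 ^ t)) := by simp [Fintype.card_sum]; omega
  · rw [one_div_mul_eq_div, div_le_iff₀ (by positivity), mul_comm]
    exact_mod_cast card_vertex_le_mul_card_arc hd (by omega) v
end
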